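/- arXiv:1804.07348 — 7 statements merged into one kernel-verified Lean document; each statement's English description precedes it below -/
import Mathlib

section
/- Let P be a pair partition of {1,…,2k} and let I ⊆ {1,…,2k} be a nonempty interval of consecutive integers. Then 2·[I|P] = |Aug_P(I)| − |Def_P(I)|. Moreover Aug_P(I) ∖ Def_P(I) is exactly the union of those pairs {j¹,j²} ∈ P for which I({j¹,j²}) ⊆ I. -/
/-- A fixed-point-free involution `π` of `Fin (2*k)` encodes a pair partition of
`{1,…,2k}`: the blocks are the pairs `{x, π x}`. -/
def IsPairPartition (k : ℕ) (π : Equiv.Perm (Fin (2*k))) : Prop :=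
  (∀ x, π (π x) = x) ∧ (∀ x, π x ≠ x)

/-- `[S|P]` : the number of intervals `I({j¹,j²}) = {j¹+1,…,j²}` associated to the pairs of the
pair partition which are subsets of `S`. -/
def pairCount (k : ℕ) (π : Equiv.Perm (Fin (2*k))) (S : Finset (Fin (2*k))) : ℕ :=
  (Finset.univ.filter (fun x => x < π x ∧ Finset.Ioc x (π x) ⊆ S)).card

/-- `Aug_P(J)` : `J` together with the element immediately to the left of `J` (if it exists
and is paired by the pair partition with an element of `J`). -/
def AugP (k : ℕ) (π : Equiv.Perm (Fin (2*k))) (J : Finset (Fin (2*k))) :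
    Finset (Fin (2*k)) :=
  J ∪ Finset.univ.filter (fun m => m ∉ J ∧ (∃ a ∈ J, (m:ℕ) + 1 = (a:ℕ)) ∧ π m ∈ J)

/-- `Def_P(J)` : the elements of `J` not paired by the pair partition with an element
of `Aug_P(J)`. -/
def DefP (k : ℕ) (π : Equiv.Perm (Fin (2*k))) (J : Finset (Fin (2*k))) :
    Finset (Fin (2*k)) :=
  J.filter (fun x => π x ∉ AugP k π J)
/-! An element `y` survives in `Aug_P(I) \ Def_P(I)` exactly when both `y` and its partner `π y`
lie in `Aug_P(I)`; for `I = [a, b]` this says that the pair `{y, π y}` has its right end in `I`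
and its left end in `I` or at `a - 1`, i.e. that `I({y, π y}) ⊆ I`. So the surviving set is the
union of the pairs counted by `[I|P]`, each contributing two elements, and `Def_P(I) ⊆ Aug_P(I)`
turns its cardinality into `|Aug_P(I)| - |Def_P(I)|`. -/

open Finset

theorem Fin.Ioc_subset_Icc_iff {n : ℕ} {x z a b : Fin n} (hxz : x < z) :
    Ioc x z ⊆ Icc a b ↔ (a : ℕ) ≤ x + 1 ∧ z ≤ b := by
  rw [← map_subset_map (f := Fin.valEmbedding), Fin.map_valEmbedding_Ioc,
    Fin.map_valEmbedding_Icc, ← Icc_add_one_left_eq_Ioc,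
    Icc_subset_Icc_iff (show (x : ℕ) + 1 ≤ z from hxz), Fin.le_def]

variable {k : ℕ} {π : Equiv.Perm (Fin (2 * k))}

theorem IsPairPartition.symm_eq (hπ : IsPairPartition k π) : π.symm = π :=
  Equiv.ext fun x => π.symm_apply_eq.2 (hπ.1 x).symm

theorem defP_subset_augP (J : Finset (Fin (2 * k))) : DefP k π J ⊆ AugP k π J :=
  (filter_subset _ _).trans subset_union_left

theorem mem_augP_Icc_iff {a b y : Fin (2 * k)} (hab : a ≤ b) :
    y ∈ AugP k π (Icc a b) ↔ y ∈ Icc a b ∨ ((y : ℕ) + 1 = a ∧ π y ∈ Icc a b) := by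
  simp only [AugP, mem_union, mem_filter, mem_univ, true_and]
  refine or_congr_right ⟨fun ⟨hy, ⟨c, hc, hyc⟩, hπy⟩ => ⟨?_, hπy⟩,
    fun ⟨hya, hπy⟩ => ⟨?_, ⟨a, left_mem_Icc.2 hab, hya⟩, hπy⟩⟩
  · simp only [mem_Icc, Fin.le_def] at hy hc
    omega
  · simp only [mem_Icc, Fin.le_def]
    omega

theorem card_filter_Ioc_min_max_subset (hπ : IsPairPartition k π) (S : Finset (Fin (2 * k))) :
    #{y | Ioc (min y (π y)) (max y (π y)) ⊆ S} = 2 * pairCount k π S := by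
  set P : Finset (Fin (2 * k)) := {x | x < π x ∧ Ioc x (π x) ⊆ S}
  have hsplit : ({y | Ioc (min y (π y)) (max y (π y)) ⊆ S} : Finset _) =
      P ∪ P.map π.toEmbedding := by
    ext y
    rcases lt_trichotomy y (π y) with h | h | h
    · simp [P, h, h.le, h.not_gt, hπ.symm_eq, hπ.1 y]
    · exact absurd h.symm (hπ.2 y)
    · simp [P, h, h.le, h.not_gt, hπ.symm_eq, hπ.1 y]
  have hdisj : Disjoint P (P.map π.toEmbedding) := by
    simp only [P, disjoint_left, mem_map_equiv, hπ.symm_eq, mem_filter, mem_univ, true_and]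
    exact fun y hy hy' => lt_asymm hy.1 (by simpa only [hπ.1 y] using hy'.1)
  rw [hsplit, card_union_of_disjoint hdisj, card_map, ← two_mul]
  rfl

theorem augP_sdiff_defP_Icc (hπ : IsPairPartition k π) {a b : Fin (2 * k)} (hab : a ≤ b) :
    AugP k π (Icc a b) \ DefP k π (Icc a b) =
      ({y | Ioc (min y (π y)) (max y (π y)) ⊆ Icc a b} : Finset _) := by
  ext y
  simp only [mem_sdiff, DefP, mem_filter, mem_univ, true_and, mem_augP_Icc_iff hab, hπ.1 y]
  rcases lt_or_gt_of_ne (hπ.2 y).symm with h | h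
  · rw [min_eq_left h.le, max_eq_right h.le, Fin.Ioc_subset_Icc_iff h]
    simp only [mem_Icc, Fin.le_def]
    omega
  · rw [min_eq_right h.le, max_eq_left h.le, Fin.Ioc_subset_Icc_iff h]
    simp only [mem_Icc, Fin.le_def]
    omega

theorem two_mul_pairCount_interval_eq_aug_sub_def
    (k : ℕ) (π : Equiv.Perm (Fin (2*k))) (hπ : IsPairPartition k π)
    (a b : Fin (2*k)) (hab : a ≤ b) (I : Finset (Fin (2*k))) (hI : I = Finset.Icc a b) :
    (2 * pairCount k π I : ℤ) = ((AugP k π I).card : ℤ) - ((DefP k π I).card : ℤ) ∧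
    AugP k π I \ DefP k π I =
      Finset.univ.filter (fun y => Finset.Ioc (min y (π y)) (max y (π y)) ⊆ I) := by
  subst hI
  have hsdiff := augP_sdiff_defP_Icc hπ hab
  refine ⟨?_, hsdiff⟩
  have hcard := card_filter_Ioc_min_max_subset hπ (Icc a b)
  rw [← hsdiff, card_sdiff_of_subset (defP_subset_augP _)] at hcard
  have hle := card_le_card (defP_subset_augP (π := π) (Icc a b))
  omega
end

section
/- Let S_0, S_1 ⊆ {1,…,n} and let y ∈ ℝ^n satisfy f_{S_0}(y) = f_{S_1}(y) = 0. Then f_{S_0∪S_1}(y) + Σ_{i ∈ S_0∩S_1} y_i is strictly positive if S_0 ⊆ S_1 or S_1 ⊆ S_0, and is strictly negative otherwise. In particular, if in addition Σ_{i ∈ S_0∩S_1} y_i ≥ 0 and neither of S_0, S_1 contains the other, then f_{S_0∪S_1}(y) < 0. -/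
/-- The hypotheses on the function `q`. -/
def qCond (q : ℕ → ℕ) : Prop :=
  q 0 = 1 ∧ (∀ a b, q a + q b < q (max a b + 1)) ∧ ∀ a, 3 * q a ≤ q (a + 1)

/-- The affine form `f_S(y) = −q(|S|) + Σ_{i∈S} y_i`. -/
def fS (n : ℕ) (q : ℕ → ℕ) (S : Finset (Fin n)) (y : Fin n → ℝ) : ℝ :=
  -(q S.card : ℝ) + ∑ i ∈ S, y i

/-! By inclusion–exclusion, `f_{S₀∪S₁}(y) + Σ_{S₀∩S₁} y = q|S₀| + q|S₁| − q|S₀∪S₁|` on the common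
zero set of `f_{S₀}` and `f_{S₁}`. If the sets are nested the union is the larger one, leaving
`q` of the smaller one, which is positive. Otherwise `S₀ ∪ S₁` is strictly larger than both, and
the superadditivity `q a + q b < q (max a b + 1)` makes the expression negative. -/

namespace qCond

variable {q : ℕ → ℕ}

theorem strictMono (hq : qCond q) : StrictMono q :=
  strictMono_nat_of_lt_succ fun a => by
    simpa using (hq.2.1 a a).trans_le' (Nat.le_add_left _ _)

theorem pos (hq : qCond q) (a : ℕ) : 0 < q a :=
  (hq.1 ▸ one_pos).trans_le (hq.strictMono.monotone a.zero_le)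

theorem add_lt_of_lt (hq : qCond q) {a b c : ℕ} (ha : a < c) (hb : b < c) :
    q a + q b < q c :=
  (hq.2.1 a b).trans_le <| hq.strictMono.monotone <| Nat.succ_le_of_lt (max_lt ha hb)

end qCond

theorem fS_union_add_sum_inter {n : ℕ} (q : ℕ → ℕ) (S T : Finset (Fin n)) (y : Fin n → ℝ) :
    fS n q (S ∪ T) y + ∑ i ∈ S ∩ T, y i
      = fS n q S y + fS n q T y + q S.card + q T.card - q (S ∪ T).card := by
  simp only [fS]
  linarith [Finset.sum_union_inter (s₁ := S) (s₂ := T) (f := y)]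

theorem Finset.card_lt_card_union_of_not_subset {α : Type*} [DecidableEq α] {S T : Finset α}
    (h : ¬T ⊆ S) : S.card < (S ∪ T).card :=
  Finset.card_lt_card (left_lt_sup.2 h)

theorem monotone_pair_dichotomy_general
    (n : ℕ) (q : ℕ → ℕ) (hq : qCond q)
    (S₀ S₁ : Finset (Fin n)) (y : Fin n → ℝ)
    (h₀ : fS n q S₀ y = 0) (h₁ : fS n q S₁ y = 0) :
    ((S₀ ⊆ S₁ ∨ S₁ ⊆ S₀) → 0 < fS n q (S₀ ∪ S₁) y + ∑ i ∈ S₀ ∩ S₁, y i) ∧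
    (¬(S₀ ⊆ S₁ ∨ S₁ ⊆ S₀) → fS n q (S₀ ∪ S₁) y + ∑ i ∈ S₀ ∩ S₁, y i < 0) ∧
    (0 ≤ ∑ i ∈ S₀ ∩ S₁, y i → ¬(S₀ ⊆ S₁ ∨ S₁ ⊆ S₀) → fS n q (S₀ ∪ S₁) y < 0) := by
  have key := fS_union_add_sum_inter q S₀ S₁ y
  rw [h₀, h₁] at key
  have crossing (h : ¬(S₀ ⊆ S₁ ∨ S₁ ⊆ S₀)) :
      (q S₀.card : ℝ) + q S₁.card < q (S₀ ∪ S₁).card := by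
    push Not at h
    have h₀₁ := Finset.card_lt_card_union_of_not_subset h.2
    have h₁₀ := Finset.card_lt_card_union_of_not_subset h.1
    rw [Finset.union_comm] at h₁₀
    exact_mod_cast hq.add_lt_of_lt h₀₁ h₁₀
  refine ⟨?_, fun h => by linarith [crossing h], fun hinter h => by linarith [crossing h]⟩
  rintro (h | h)
  · rw [Finset.union_eq_right.2 h] at key ⊢
    linarith [(Nat.cast_pos (α := ℝ)).2 (hq.pos S₀.card)]
  · rw [Finset.union_eq_left.2 h] at key ⊢
    linarith [(Nat.cast_pos (α := ℝ)).2 (hq.pos S₁.card)]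

theorem monotone_pair_dichotomy
    (n : ℕ) (hn : 1 ≤ n) (q : ℕ → ℕ) (hq : qCond q)
    (S₀ S₁ : Finset (Fin n)) (y : Fin n → ℝ)
    (h₀ : fS n q S₀ y = 0) (h₁ : fS n q S₁ y = 0) :
    ((S₀ ⊆ S₁ ∨ S₁ ⊆ S₀) → 0 < fS n q (S₀ ∪ S₁) y + ∑ i ∈ S₀ ∩ S₁, y i) ∧
    (¬(S₀ ⊆ S₁ ∨ S₁ ⊆ S₀) → fS n q (S₀ ∪ S₁) y + ∑ i ∈ S₀ ∩ S₁, y i < 0) ∧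
    (0 ≤ ∑ i ∈ S₀ ∩ S₁, y i → ¬(S₀ ⊆ S₁ ∨ S₁ ⊆ S₀) → fS n q (S₀ ∪ S₁) y < 0) :=
  monotone_pair_dichotomy_general n q hq S₀ S₁ y h₀ h₁
end

section
/- Let y be a boundary point of the region Ω = ∩_{∅≠S⊆{1,…,n}} {f_S > 0} and let S_1,…,S_r be distinct subsets of {1,…,n} with f_{S_1}(y) = ⋯ = f_{S_r}(y) = 0. Then none of the S_i is empty, and the collection {S_1,…,S_r} is monotone, i.e. totally ordered by inclusion. -/
/-- The region `Ω = ∩_{∅≠S⊆{1,…,n}} {f_S > 0}`. -/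
def Omega (n : ℕ) (q : ℕ → ℕ) : Set (Fin n → ℝ) :=
  {y | ∀ S : Finset (Fin n), S.Nonempty → 0 < fS n q S y}

/-!
On the closure of `Ω` every form `f_T` with `T ≠ ∅` is nonnegative, so the partial sums
`Σ_{i∈T} y_i` are nonnegative for all `T`. If `f_A(y) = f_B(y) = 0` with `A`, `B`
incomparable, then `|A ∪ B| > max(|A|, |B|)`, and inclusion–exclusion gives
`q(|A ∪ B|) ≤ Σ_{A∪B} y = q(|A|) + q(|B|) - Σ_{A∩B} y ≤ q(|A|) + q(|B|)`,
contradicting the growth condition on `q`. The empty set is excluded because `f_∅ = -q(0) = -1`.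
-/

open Finset

lemma strictMono_of_add_lt_max_succ {q : ℕ → ℕ} (hq : ∀ a b, q a + q b < q (max a b + 1)) :
    StrictMono q :=
  strictMono_nat_of_lt_succ fun a => by have := hq a a; simp only [max_self] at this; omega

lemma fS_empty (n : ℕ) (q : ℕ → ℕ) (y : Fin n → ℝ) : fS n q ∅ y = -(q 0 : ℝ) := by
  simp [fS]

lemma continuous_fS (n : ℕ) (q : ℕ → ℕ) (S : Finset (Fin n)) : Continuous (fS n q S) :=
  continuous_const.add (continuous_finsetSum _ fun i _ => continuous_apply i)

lemma fS_nonneg_of_mem_closure {n : ℕ} {q : ℕ → ℕ} {y : Fin n → ℝ}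
    (hy : y ∈ closure (Omega n q)) {S : Finset (Fin n)} (hS : S.Nonempty) : 0 ≤ fS n q S y :=
  closure_minimal (fun _ hz => (hz S hS).le) (isClosed_le continuous_const (continuous_fS n q S)) hy

lemma sum_nonneg_of_mem_closure {n : ℕ} {q : ℕ → ℕ} {y : Fin n → ℝ}
    (hy : y ∈ closure (Omega n q)) (S : Finset (Fin n)) : 0 ≤ ∑ i ∈ S, y i := by
  rcases S.eq_empty_or_nonempty with rfl | hS
  · simp
  · have := fS_nonneg_of_mem_closure hy hS
    simp only [fS] at this
    linarith [(q S.card).cast_nonneg (α := ℝ)]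

lemma card_union_gt_max {α : Type*} [DecidableEq α] {A B : Finset α} (hAB : ¬A ⊆ B)
    (hBA : ¬B ⊆ A) : max #A #B < #(A ∪ B) := by
  have hA : #A < #(A ∪ B) := card_lt_card (left_lt_sup.2 hBA)
  have hB : #B < #(A ∪ B) := card_lt_card (right_lt_sup.2 hAB)
  omega

lemma subset_or_subset_of_fS_eq_zero {n : ℕ} {q : ℕ → ℕ}
    (hq : ∀ a b, q a + q b < q (max a b + 1)) {y : Fin n → ℝ} (hy : y ∈ closure (Omega n q))
    {A B : Finset (Fin n)} (hA : fS n q A y = 0) (hB : fS n q B y = 0) (hne : A.Nonempty) :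
    A ⊆ B ∨ B ⊆ A := by
  by_contra! hincomp
  have hgrowth : (q #A + q #B : ℝ) < q #(A ∪ B) := by
    exact_mod_cast (hq #A #B).trans_le
      ((strictMono_of_add_lt_max_succ hq).monotone (card_union_gt_max hincomp.1 hincomp.2))
  have hunion := fS_nonneg_of_mem_closure hy (hne.mono (subset_union_left (s₂ := B)))
  have hinter := sum_nonneg_of_mem_closure hy (A ∩ B)
  have hincl : ∑ i ∈ A ∪ B, y i + ∑ i ∈ A ∩ B, y i = ∑ i ∈ A, y i + ∑ i ∈ B, y i :=
    sum_union_inter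
  simp only [fS] at hA hB hunion
  linarith

theorem vanishing_forms_at_boundary_are_monotone_general
    (n : ℕ) (q : ℕ → ℕ) (hq : qCond q)
    (y : Fin n → ℝ) (hy : y ∈ frontier (Omega n q))
    (r : ℕ) (S : Fin r → Finset (Fin n))
    (hz : ∀ i, fS n q (S i) y = 0) :
    (∀ i, (S i).Nonempty) ∧ (∀ i j, S i ⊆ S j ∨ S j ⊆ S i) := by
  obtain ⟨hq0, hgrowth, -⟩ := hq
  have hne : ∀ i, (S i).Nonempty := fun i => by
    rw [nonempty_iff_ne_empty]
    intro hempty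
    simpa [hempty, fS_empty, hq0] using hz i
  exact ⟨hne, fun i j =>
    subset_or_subset_of_fS_eq_zero hgrowth (frontier_subset_closure hy) (hz i) (hz j) (hne i)⟩

theorem vanishing_forms_at_boundary_are_monotone
    (n : ℕ) (hn : 1 ≤ n) (q : ℕ → ℕ) (hq : qCond q)
    (y : Fin n → ℝ) (hy : y ∈ frontier (Omega n q))
    (r : ℕ) (S : Fin r → Finset (Fin n)) (hS : Function.Injective S)
    (hz : ∀ i, fS n q (S i) y = 0) :
    (∀ i, (S i).Nonempty) ∧ (∀ i j, S i ⊆ S j ∨ S j ⊆ S i) :=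
  vanishing_forms_at_boundary_are_monotone_general n q hq y hy r S hz
end

section
/- Let S_1 ⊊ S_2 ⊊ ⋯ ⊊ S_r be a strictly increasing chain of nonempty subsets of {1,…,n}. Then the set Ω({S_1,…,S_r}) = ∂Ω ∩ (∩_{i=1}^r L_{S_i}) ∩ (∪_{∅≠S∉{S_1,…,S_r}} L_S)^c is a nonempty convex set, relatively open in the affine subspace ∩_{i=1}^r L_{S_i} ⊆ ℝ^n, and this affine subspace has codimension r. -/
/-- The hyperplane `L_S = {f_S = 0}`. -/
def Lhyp (n : ℕ) (q : ℕ → ℕ) (S : Finset (Fin n)) : Set (Fin n → ℝ) :=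
  {y | fS n q S y = 0}

/-!
On the stratum the forms `f_{S_i}` vanish and every other `f_T` is strictly positive, so once
`closure Ω = {y | ∀ T ≠ ∅, 0 ≤ f_T y}` (true because `Ω` is a nonempty finite intersection of
open half-spaces) the stratum is the affine subspace `⋂ L_{S_i}` cut by finitely many open
half-spaces: convex and relatively open.

For a point, let `Q` be `q` with `Q 0 = 0`; by `3 q(a) ≤ q(a+1)` the increments of `Q` are
strictly increasing. Prepend `∅` to the chain and give every coordinate of the layer
`S_k \ S_{k-1}` the average increment of `Q` across that layer (and a huge value outside `S_r`).
Discrete convexity of `Q` gives `Q |T| ≤ ∑_{i ∈ T} y_i`, with equality exactly on the chain.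

For the codimension, elements `t_k ∈ S_k \ S_{k-1}` make `y ↦ (∑_{j ∈ S_i} y_j)_i` send the
unit vectors `e_{t_k}` to a unitriangular system, so this map onto `ℝ^r` is surjective.
-/

open Finset

namespace BoundaryStratum

section IncrementConvex

variable {Q : ℕ → ℝ}

theorem monotone_of_strictMono_sub (hQ : StrictMono fun s => Q (s + 1) - Q s) (h01 : Q 0 ≤ Q 1) :
    Monotone Q :=
  monotone_nat_of_le_succ fun s => by
    have := hQ.monotone (Nat.zero_le s)
    simp only [zero_add] at this
    linarith

theorem strictMono_sub_add (hQ : StrictMono fun s => Q (s + 1) - Q s) {a : ℕ} (ha : 0 < a) :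
    StrictMono fun p => Q (p + a) - Q p :=
  strictMono_nat_of_lt_succ fun p => by
    have := hQ (show p < p + a by omega)
    simp only [add_right_comm p 1 a] at this ⊢
    linarith

theorem sub_le_sub_add (hQ : StrictMono fun s => Q (s + 1) - Q s) {p P : ℕ} (hp : p ≤ P)
    (a : ℕ) : Q (p + a) - Q p ≤ Q (P + a) - Q P := by
  rcases Nat.eq_zero_or_pos a with rfl | ha
  · simp
  · exact (strictMono_sub_add hQ ha).monotone hp

theorem sub_lt_mul_sub_succ (hQ : StrictMono fun s => Q (s + 1) - Q s) (P : ℕ) {a : ℕ}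
    (ha : 0 < a) : Q (P + a) - Q P < a * (Q (P + a + 1) - Q (P + a)) := by
  have htel := sum_range_sub (fun s => Q (P + s)) a
  simp only [add_zero, ← add_assoc] at htel
  rw [← htel]
  calc ∑ s ∈ range a, (Q (P + s + 1) - Q (P + s))
      < ∑ _s ∈ range a, (Q (P + a + 1) - Q (P + a)) :=
        sum_lt_sum_of_nonempty (nonempty_range_iff.mpr ha.ne') fun s hs =>
          hQ (by simp only [mem_range] at hs; omega)
    _ = a * (Q (P + a + 1) - Q (P + a)) := by simp [mul_sub]

theorem mul_sub_lt_mul_sub (hQ : StrictMono fun s => Q (s + 1) - Q s) (P : ℕ) {a d : ℕ}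
    (ha : 0 < a) (had : a < d) : d * (Q (P + a) - Q P) < a * (Q (P + d) - Q P) := by
  have hslope := sub_lt_mul_sub_succ hQ P ha
  induction d, had using Nat.le_induction with
  | base =>
    rw [Nat.succ_eq_add_one, ← add_assoc]
    push_cast
    linarith
  | succ d had ih =>
    have hinc : Q (P + a + 1) - Q (P + a) ≤ Q (P + d + 1) - Q (P + d) := hQ.monotone (by omega)
    have := mul_le_mul_of_nonneg_left hinc (Nat.cast_nonneg (α := ℝ) a)
    push_cast
    rw [← add_assoc]
    linarith

theorem mul_sub_le_mul_sub (hQ : StrictMono fun s => Q (s + 1) - Q s) (P : ℕ) {a d : ℕ}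
    (had : a ≤ d) : d * (Q (P + a) - Q P) ≤ a * (Q (P + d) - Q P) := by
  rcases Nat.eq_zero_or_pos a with rfl | ha
  · simp
  rcases had.eq_or_lt with rfl | had
  · rw [mul_comm]
  · exact (mul_sub_lt_mul_sub hQ P ha had).le

theorem sub_le_mul_div (hQ : StrictMono fun s => Q (s + 1) - Q s) {p P a d : ℕ} (hp : p ≤ P)
    (had : a ≤ d) : Q (p + a) - Q p ≤ a * ((Q (P + d) - Q P) / d) := by
  rcases Nat.eq_zero_or_pos d with rfl | hd
  · simp [Nat.le_zero.mp had]
  rw [mul_div_assoc', le_div_iff₀ (by exact_mod_cast hd)]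
  calc (Q (p + a) - Q p) * d ≤ (Q (P + a) - Q P) * d :=
        mul_le_mul_of_nonneg_right (sub_le_sub_add hQ hp a) d.cast_nonneg
    _ ≤ a * (Q (P + d) - Q P) := by rw [mul_comm]; exact mul_sub_le_mul_sub hQ P had

theorem sub_lt_mul_div (hQ : StrictMono fun s => Q (s + 1) - Q s) {p P a d : ℕ} (hp : p ≤ P)
    (had : a ≤ d) (ha : 0 < a) (hstrict : p < P ∨ a < d) :
    Q (p + a) - Q p < a * ((Q (P + d) - Q P) / d) := by
  have hd : (0 : ℝ) < d := by exact_mod_cast ha.trans_le had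
  rw [mul_div_assoc', lt_div_iff₀ hd]
  rcases hstrict with hpP | had'
  · calc (Q (p + a) - Q p) * d < (Q (P + a) - Q P) * d :=
          mul_lt_mul_of_pos_right (strictMono_sub_add hQ ha hpP) hd
      _ ≤ a * (Q (P + d) - Q P) := by rw [mul_comm]; exact mul_sub_le_mul_sub hQ P had
  · calc (Q (p + a) - Q p) * d ≤ (Q (P + a) - Q P) * d :=
          mul_le_mul_of_nonneg_right (sub_le_sub_add hQ hp a) hd.le
      _ < a * (Q (P + d) - Q P) := by rw [mul_comm]; exact mul_sub_lt_mul_sub hQ P ha had'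

end IncrementConvex

section Chain

variable {α : Type*} [DecidableEq α] {D : ℕ → Finset α} {m : ℕ}

theorem mem_succ_iff_of_mem_sdiff (hD : StrictMonoOn D (Set.Iic m)) {k l : ℕ} {i : α}
    (hi : i ∈ D (k + 1) \ D k) (hk : k < m) (hl : l < m) : i ∈ D (l + 1) ↔ k ≤ l := by
  rw [mem_sdiff] at hi
  constructor
  · intro hil
    by_contra! hlk
    exact hi.2 (hD.monotoneOn (Set.mem_Iic.2 (by omega)) (Set.mem_Iic.2 hk.le) hlk hil)
  · intro hkl
    exact hD.monotoneOn (Set.mem_Iic.2 hk) (Set.mem_Iic.2 hl) (by omega) hi.1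

theorem card_succ_eq_add_card_sdiff (hD : StrictMonoOn D (Set.Iic m)) {k : ℕ} (hk : k < m) :
    #(D (k + 1)) = #(D k) + #(D (k + 1) \ D k) := by
  rw [← card_sdiff_add_card_eq_card
    (hD.monotoneOn (Set.mem_Iic.2 hk.le) (Set.mem_Iic.2 hk) k.le_succ), add_comm]

theorem sdiff_succ_nonempty (hD : StrictMonoOn D (Set.Iic m)) {k : ℕ} (hk : k < m) :
    (D (k + 1) \ D k).Nonempty :=
  sdiff_nonempty.2 (hD (Set.mem_Iic.2 hk.le) (Set.mem_Iic.2 hk) k.lt_succ_self).not_subset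

noncomputable def layerSlope (Q : ℕ → ℝ) (D : ℕ → Finset α) (k : ℕ) : ℝ :=
  (Q #(D (k + 1)) - Q #(D k)) / #(D (k + 1) \ D k)

variable {Q : ℕ → ℝ} {y : α → ℝ}

theorem sum_eq_card_mul_layerSlope {k : ℕ}
    (hy : ∀ i ∈ D (k + 1) \ D k, y i = layerSlope Q D k) {A : Finset α}
    (hA : A ⊆ D (k + 1) \ D k) : ∑ i ∈ A, y i = #A * layerSlope Q D k := by
  rw [sum_congr rfl fun i hi => hy i (hA hi), sum_const, nsmul_eq_mul]

theorem sum_chain_eq_sub (hD0 : D 0 = ∅) (hD : StrictMonoOn D (Set.Iic m))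
    (hy : ∀ k < m, ∀ i ∈ D (k + 1) \ D k, y i = layerSlope Q D k) :
    ∀ k ≤ m, ∑ i ∈ D k, y i = Q #(D k) - Q 0
  | 0, _ => by simp [hD0]
  | k + 1, hk => by
    have hsub : D k ⊆ D (k + 1) :=
      hD.monotoneOn (Set.mem_Iic.2 (by omega)) (Set.mem_Iic.2 hk) k.le_succ
    have hlayer : (#(D (k + 1) \ D k) : ℝ) ≠ 0 := by
      exact_mod_cast (sdiff_succ_nonempty hD hk).card_pos.ne'
    rw [← sum_sdiff hsub, sum_chain_eq_sub hD0 hD hy k (by omega),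
      sum_eq_card_mul_layerSlope (hy k hk) subset_rfl, layerSlope, mul_div_cancel₀ _ hlayer]
    ring

theorem sum_sdiff_eq_card_mul (hD : StrictMonoOn D (Set.Iic m)) {k : ℕ} (hk : k < m)
    (hy : ∀ i ∈ D (k + 1) \ D k, y i = layerSlope Q D k) {T : Finset α}
    (hT : T ⊆ D (k + 1)) :
    ∑ i ∈ T \ D k, y i =
      #(T \ D k) * ((Q (#(D k) + #(D (k + 1) \ D k)) - Q #(D k)) / #(D (k + 1) \ D k)) := by
  rw [sum_eq_card_mul_layerSlope hy (sdiff_subset_sdiff hT subset_rfl), layerSlope,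
    ← card_succ_eq_add_card_sdiff hD hk]

theorem sub_card_inter_le_sum_sdiff (hQ : StrictMono fun s => Q (s + 1) - Q s)
    (hD : StrictMonoOn D (Set.Iic m)) {k : ℕ} (hk : k < m)
    (hy : ∀ i ∈ D (k + 1) \ D k, y i = layerSlope Q D k) {T : Finset α}
    (hT : T ⊆ D (k + 1)) :
    Q #T - Q #(T ∩ D k) ≤ ∑ i ∈ T \ D k, y i := by
  rw [sum_sdiff_eq_card_mul hD hk hy hT, ← card_inter_add_card_sdiff T (D k)]
  exact sub_le_mul_div hQ (card_le_card inter_subset_right)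
    (card_le_card (sdiff_subset_sdiff hT subset_rfl))

theorem sub_card_inter_lt_sum_sdiff (hQ : StrictMono fun s => Q (s + 1) - Q s)
    (hD : StrictMonoOn D (Set.Iic m)) {k : ℕ} (hk : k < m)
    (hy : ∀ i ∈ D (k + 1) \ D k, y i = layerSlope Q D k) {T : Finset α} (hT : T ⊆ D (k + 1))
    (hTk : (T \ D k).Nonempty) (hTD : T ≠ D (k + 1)) :
    Q #T - Q #(T ∩ D k) < ∑ i ∈ T \ D k, y i := by
  have hcard := card_inter_add_card_sdiff T (D k)
  have hp : #(T ∩ D k) ≤ #(D k) := card_le_card inter_subset_right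
  have ha : #(T \ D k) ≤ #(D (k + 1) \ D k) := card_le_card (sdiff_subset_sdiff hT subset_rfl)
  have hstrict : #(T ∩ D k) < #(D k) ∨ #(T \ D k) < #(D (k + 1) \ D k) := by
    by_contra! hge
    refine hTD (eq_of_subset_of_card_le hT ?_)
    rw [card_succ_eq_add_card_sdiff hD hk]
    omega
  rw [sum_sdiff_eq_card_mul hD hk hy hT, ← hcard]
  exact sub_lt_mul_div hQ hp ha hTk.card_pos hstrict

theorem sub_lt_sum_of_ne_chain (hQ : StrictMono fun s => Q (s + 1) - Q s) (hD0 : D 0 = ∅) :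
    ∀ {m : ℕ}, StrictMonoOn D (Set.Iic m) →
      (∀ k < m, ∀ i ∈ D (k + 1) \ D k, y i = layerSlope Q D k) →
      ∀ {T : Finset α}, T ⊆ D m → (∀ j ≤ m, T ≠ D j) → Q #T - Q 0 < ∑ i ∈ T, y i
  | 0, _, _, T, hT, hTD => (hTD 0 le_rfl (subset_empty.1 (hD0 ▸ hT) ▸ hD0.symm)).elim
  | m + 1, hD, hy, T, hT, hTD => by
    have hDm : StrictMonoOn D (Set.Iic m) := hD.mono (Set.Iic_subset_Iic.2 m.le_succ)
    have hym : ∀ k < m, ∀ i ∈ D (k + 1) \ D k, y i = layerSlope Q D k :=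
      fun k hk => hy k (by omega)
    rw [← sum_inter_add_sum_sdiff T (D m)]
    -- Strictness comes from the top layer if `T ∩ D m` is in the chain, else from induction.
    by_cases hchain : ∃ j ≤ m, T ∩ D m = D j
    · obtain ⟨j, hj, hTj⟩ := hchain
      have hTm : (T \ D m).Nonempty := sdiff_nonempty.2 fun hTm =>
        hTD j (by omega) (by rwa [inter_eq_left.2 hTm] at hTj)
      have hlayer := sub_card_inter_lt_sum_sdiff hQ hD m.lt_succ_self (hy m m.lt_succ_self) hT hTm
        (hTD _ le_rfl)
      rw [hTj] at hlayer ⊢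
      rw [sum_chain_eq_sub hD0 hDm hym j hj]
      linarith
    · push Not at hchain
      have hlayer := sub_card_inter_le_sum_sdiff hQ hD m.lt_succ_self (hy m m.lt_succ_self) hT
      have hIH := sub_lt_sum_of_ne_chain hQ hD0 hDm hym inter_subset_right hchain
      linarith

noncomputable def layerPoint (Q : ℕ → ℝ) (D : ℕ → Finset α) (m : ℕ) (c : ℝ) (i : α) :
    ℝ :=
  if h : ∃ k < m, i ∈ D (k + 1) then layerSlope Q D (Nat.find h) else c

theorem layerPoint_of_mem_sdiff (hD : StrictMonoOn D (Set.Iic m)) {c : ℝ} {k : ℕ} (hk : k < m)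
    {i : α} (hi : i ∈ D (k + 1) \ D k) : layerPoint Q D m c i = layerSlope Q D k := by
  have h : ∃ k < m, i ∈ D (k + 1) := ⟨k, hk, (mem_sdiff.1 hi).1⟩
  rw [layerPoint, dif_pos h, (Nat.find_eq_iff h).2]
  refine ⟨⟨hk, (mem_sdiff.1 hi).1⟩, fun j hjk ⟨hjm, hij⟩ => ?_⟩
  exact absurd ((mem_succ_iff_of_mem_sdiff hD hi hk hjm).1 hij) (by omega)

theorem layerPoint_of_notMem (hD : StrictMonoOn D (Set.Iic m)) {c : ℝ} {i : α} (hi : i ∉ D m) :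
    layerPoint Q D m c i = c := by
  refine dif_neg fun ⟨k, hk, hik⟩ => hi ?_
  exact hD.monotoneOn (Set.mem_Iic.2 hk) (Set.mem_Iic.2 le_rfl) hk hik

theorem layerPoint_nonneg (hQ : Monotone Q) (hD : StrictMonoOn D (Set.Iic m)) {c : ℝ}
    (hc : 0 ≤ c) (i : α) : 0 ≤ layerPoint Q D m c i := by
  unfold layerPoint
  split_ifs with h
  · have hk := (Nat.find_spec h).1
    have hsub := hD.monotoneOn (Set.mem_Iic.2 hk.le) (Set.mem_Iic.2 hk) (Nat.find h).le_succ
    exact div_nonneg (sub_nonneg.2 (hQ (card_le_card hsub))) (Nat.cast_nonneg _)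
  · exact hc

theorem exists_sum_eq_on_chain_and_lt_off_chain [Fintype α]
    (hQ : StrictMono fun s => Q (s + 1) - Q s) (hQm : Monotone Q) (hD0 : D 0 = ∅)
    (hD : StrictMonoOn D (Set.Iic m)) :
    ∃ y : α → ℝ, (∀ k ≤ m, ∑ i ∈ D k, y i = Q #(D k) - Q 0) ∧
      ∀ T : Finset α, (∀ j ≤ m, T ≠ D j) → Q #T - Q 0 < ∑ i ∈ T, y i := by
  set c := Q (Fintype.card α) - Q 0 + 1
  have hc : 0 ≤ c := by linarith [hQm (Nat.zero_le (Fintype.card α))]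
  have hy : ∀ k < m, ∀ i ∈ D (k + 1) \ D k, layerPoint Q D m c i = layerSlope Q D k :=
    fun k hk i hi => layerPoint_of_mem_sdiff hD hk hi
  refine ⟨layerPoint Q D m c, sum_chain_eq_sub hD0 hD hy, fun T hTD => ?_⟩
  by_cases hT : T ⊆ D m
  · exact sub_lt_sum_of_ne_chain hQ hD0 hD hy hT hTD
  · obtain ⟨i, hiT, hiD⟩ := not_subset.1 hT
    calc Q #T - Q 0 < c := by linarith [hQm (card_le_univ T)]
      _ = layerPoint Q D m c i := (layerPoint_of_notMem hD hiD).symm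
      _ ≤ ∑ j ∈ T, layerPoint Q D m c j :=
        single_le_sum (fun j _ => layerPoint_nonneg hQm hD hc j) hiT

end Chain

section ChainOfSets

variable {α : Type*} {r : ℕ} {S : Fin r → Finset α}

-- Only the values at `0, …, r` are meaningful.
def chainOf (S : Fin r → Finset α) : ℕ → Finset α
  | 0 => ∅
  | k + 1 => if h : k < r then S ⟨k, h⟩ else ∅

theorem chainOf_succ (k : Fin r) : chainOf S (k + 1) = S k := dif_pos k.isLt

theorem strictMonoOn_chainOf (hne : ∀ i, (S i).Nonempty) (hS : StrictMono S) :
    StrictMonoOn (chainOf S) (Set.Iic r) := by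
  rintro (_ | k) - (_ | l) hl hkl
  · omega
  · exact (chainOf_succ (S := S) ⟨l, Set.mem_Iic.1 hl⟩).symm ▸ (hne _).empty_ssubset
  · omega
  · have hl : l < r := Set.mem_Iic.1 hl
    rw [chainOf_succ (S := S) ⟨k, by omega⟩, chainOf_succ (S := S) ⟨l, hl⟩]
    exact hS (Fin.mk_lt_mk.2 (by omega))

theorem ne_chainOf {T : Finset α} (hT : T.Nonempty) (hTS : T ∉ Set.range S) :
    ∀ j ≤ r, T ≠ chainOf S j
  | 0, _ => hT.ne_empty
  | j + 1, hj => chainOf_succ (S := S) ⟨j, by omega⟩ ▸ fun h => hTS ⟨_, h.symm⟩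

end ChainOfSets

section Codimension

variable {α : Type*} [DecidableEq α] {r : ℕ} {S : Fin r → Finset α}

theorem sum_proj_single (s : Finset α) (t : α) :
    (∑ j ∈ s, LinearMap.proj j : (α → ℝ) →ₗ[ℝ] ℝ) (Pi.single t 1) =
      if t ∈ s then 1 else 0 := by
  simp [LinearMap.sum_apply, Pi.single_apply]

theorem range_pi_sum_proj_eq_top (hne : ∀ i, (S i).Nonempty) (hS : StrictMono S) :
    LinearMap.range (LinearMap.pi fun i : Fin r =>
      ∑ j ∈ S i, (LinearMap.proj j : (α → ℝ) →ₗ[ℝ] ℝ)) = ⊤ := by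
  set Φ := LinearMap.pi fun i : Fin r =>
    ∑ j ∈ S i, (LinearMap.proj j : (α → ℝ) →ₗ[ℝ] ℝ)
  have hD := strictMonoOn_chainOf hne hS
  choose t ht using fun k (hk : k < r) => sdiff_succ_nonempty hD hk
  let u : ℕ → Fin r → ℝ := fun k l => if k ≤ l then 1 else 0
  have hu : ∀ k, u k ∈ LinearMap.range Φ := by
    intro k
    by_cases hk : k < r
    · refine ⟨Pi.single (t k hk) 1, funext fun l => ?_⟩
      simp only [Φ, u, LinearMap.pi_apply, sum_proj_single, ← chainOf_succ l,
        mem_succ_iff_of_mem_sdiff hD (ht k hk) hk l.isLt]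
    · convert (LinearMap.range Φ).zero_mem
      funext l
      simp only [u, Pi.zero_apply, ite_eq_right_iff]
      omega
  rw [eq_top_iff, ← (Pi.basisFun ℝ (Fin r)).span_eq, Submodule.span_le]
  rintro _ ⟨l, rfl⟩
  have hl : Pi.basisFun ℝ (Fin r) l = u l - u (l + 1) := by
    funext l'
    simp only [Pi.basisFun_apply, Pi.single_apply, Pi.sub_apply, u, Fin.ext_iff]
    split_ifs <;> first | omega | norm_num
  rw [SetLike.mem_coe, hl]
  exact sub_mem (hu l) (hu (l + 1))

theorem finrank_iInf_ker_sum_proj [Fintype α] (hne : ∀ i, (S i).Nonempty) (hS : StrictMono S) :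
    Module.finrank ℝ
      ↥(⨅ i : Fin r, LinearMap.ker (∑ j ∈ S i, (LinearMap.proj j : (α → ℝ) →ₗ[ℝ] ℝ))) =
      Fintype.card α - r := by
  have h := (LinearMap.pi fun i : Fin r =>
    ∑ j ∈ S i, (LinearMap.proj j : (α → ℝ) →ₗ[ℝ] ℝ)).finrank_range_add_finrank_ker
  rw [range_pi_sum_proj_eq_top hne hS, finrank_top, LinearMap.ker_pi, Module.finrank_fin_fun,
    Module.finrank_fintype_fun_eq_card] at h
  omega

end Codimension

section Region

variable {n : ℕ} {q : ℕ → ℕ}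

theorem continuous_fS (T : Finset (Fin n)) : Continuous (fS n q T) := by
  unfold fS
  fun_prop

theorem fS_combo {a b : ℝ} (hab : a + b = 1) (T : Finset (Fin n)) (x z : Fin n → ℝ) :
    fS n q T (a • x + b • z) = a * fS n q T x + b * fS n q T z := by
  simp only [fS, Pi.add_apply, Pi.smul_apply, smul_eq_mul, sum_add_distrib, ← mul_sum]
  linear_combination (q #T : ℝ) * hab

def posOutside (n : ℕ) (q : ℕ → ℕ) (R : Set (Finset (Fin n))) : Set (Fin n → ℝ) :=
  {y | ∀ T : Finset (Fin n), T.Nonempty → T ∉ R → 0 < fS n q T y}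

def omegaBar (n : ℕ) (q : ℕ → ℕ) : Set (Fin n → ℝ) :=
  {y | ∀ T : Finset (Fin n), T.Nonempty → 0 ≤ fS n q T y}

theorem Omega_eq_posOutside : Omega n q = posOutside n q ∅ := by
  simp [Omega, posOutside]

theorem isOpen_posOutside (R : Set (Finset (Fin n))) : IsOpen (posOutside n q R) := by
  simp only [posOutside, Set.ofPred_forall]
  exact isOpen_iInter_of_finite fun T => isOpen_iInter_of_finite fun _ =>
    isOpen_iInter_of_finite fun _ => isOpen_lt continuous_const (continuous_fS T)

theorem convex_posOutside (R : Set (Finset (Fin n))) : Convex ℝ (posOutside n q R) :=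
  convex_iff_forall_pos.2 fun x hx z hz a b ha hb hab T hT hTR => by
    rw [fS_combo hab]
    exact add_pos (mul_pos ha (hx T hT hTR)) (mul_pos hb (hz T hT hTR))

theorem convex_Lhyp (T : Finset (Fin n)) : Convex ℝ (Lhyp n q T) :=
  convex_iff_forall_pos.2 fun x hx z hz a b _ _ hab => by
    simp only [Lhyp, Set.mem_ofPred_eq] at hx hz ⊢
    rw [fS_combo hab, hx, hz]
    ring

theorem isClosed_omegaBar : IsClosed (omegaBar n q) := by
  simp only [omegaBar, Set.ofPred_forall]
  exact isClosed_iInter fun T => isClosed_iInter fun _ =>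
    isClosed_le continuous_const (continuous_fS T)

theorem Omega_nonempty : (Omega n q).Nonempty := by
  refine ⟨fun _ => (∑ s ∈ range (n + 1), (q s : ℝ)) + 1, fun T hT => ?_⟩
  have hq : (q #T : ℝ) ≤ ∑ s ∈ range (n + 1), (q s : ℝ) :=
    single_le_sum (fun s _ => Nat.cast_nonneg _)
      (mem_range.2 (Nat.lt_succ_of_le (card_le_univ T |>.trans_eq (Fintype.card_fin n))))
  have hcard : (1 : ℝ) ≤ #T := by exact_mod_cast hT.card_pos
  have hsum : (0 : ℝ) ≤ ∑ s ∈ range (n + 1), (q s : ℝ) :=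
    sum_nonneg fun s _ => Nat.cast_nonneg _
  simp only [fS, sum_const, nsmul_eq_mul]
  nlinarith

theorem closure_Omega : closure (Omega n q) = omegaBar n q := by
  refine subset_antisymm (closure_minimal (fun y hy T hT => (hy T hT).le) isClosed_omegaBar)
    fun y hy => ?_
  obtain ⟨z, hz⟩ := Omega_nonempty (n := n) (q := q)
  have hseg : openSegment ℝ z y ⊆ Omega n q := by
    rintro _ ⟨a, b, ha, hb, hab, rfl⟩ T hT
    rw [fS_combo hab]
    exact add_pos_of_pos_of_nonneg (mul_pos ha (hz T hT)) (mul_nonneg hb.le (hy T hT))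
  exact closure_mono hseg (segment_subset_closure_openSegment (right_mem_segment ℝ z y))

theorem frontier_Omega : frontier (Omega n q) = omegaBar n q \ Omega n q := by
  rw [(Omega_eq_posOutside ▸ isOpen_posOutside ∅ : IsOpen (Omega n q)).frontier_eq,
    closure_Omega]

variable {r : ℕ} {S : Fin r → Finset (Fin n)}

theorem stratum_eq (hr : 1 ≤ r) (hne : ∀ i, (S i).Nonempty) :
    frontier (Omega n q) ∩ (⋂ i, Lhyp n q (S i)) ∩
        (⋃ T ∈ {T : Finset (Fin n) | T.Nonempty ∧ T ∉ Set.range S}, Lhyp n q T)ᶜ =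
      posOutside n q (Set.range S) ∩ ⋂ i, Lhyp n q (S i) := by
  ext y
  simp only [frontier_Omega, Set.mem_inter_iff, Set.mem_sdiff, Set.mem_compl_iff,
    Set.mem_iInter, Set.mem_iUnion, Set.mem_ofPred_eq, Lhyp, not_exists, and_imp]
  constructor
  · rintro ⟨⟨⟨hbar, -⟩, hL⟩, hoff⟩
    exact ⟨fun T hT hTS => (hbar T hT).lt_of_ne' (hoff T hT hTS), hL⟩
  · rintro ⟨hpos, hL⟩
    refine ⟨⟨⟨fun T hT => ?_, fun hΩ => (hΩ _ (hne ⟨0, hr⟩)).ne' (hL _)⟩, hL⟩,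
      fun T hT hTS => (hpos T hT hTS).ne'⟩
    by_cases hTS : T ∈ Set.range S
    · obtain ⟨i, rfl⟩ := hTS
      exact (hL i).ge
    · exact (hpos T hT hTS).le

end Region

section QBar

variable {q : ℕ → ℕ}

-- The value `0` at `0` lets `∅` serve as the bottom of every chain.
def qBar (q : ℕ → ℕ) : ℕ → ℝ := Function.update (fun s => (q s : ℝ)) 0 0

theorem qBar_zero : qBar q 0 = 0 := Function.update_self ..

theorem qBar_of_pos {s : ℕ} (hs : 0 < s) : qBar q s = q s :=
  Function.update_of_ne hs.ne' ..

theorem one_le_q (hq : qCond q) (a : ℕ) : 1 ≤ q a := by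
  induction a with
  | zero => exact hq.1.ge
  | succ a ih => linarith [hq.2.2 a]

theorem strictMono_qBar_sub (hq : qCond q) : StrictMono fun s => qBar q (s + 1) - qBar q s := by
  refine strictMono_nat_of_lt_succ fun s => ?_
  have h3 : (3 * q (s + 1) : ℝ) ≤ q (s + 1 + 1) := by exact_mod_cast hq.2.2 (s + 1)
  have h1 : (1 : ℝ) ≤ q (s + 1) := by exact_mod_cast one_le_q hq (s + 1)
  rcases s with _ | s
  · simp only [qBar_zero, qBar_of_pos (Nat.succ_pos _)] at h3 h1 ⊢
    linarith
  · simp only [qBar_of_pos (Nat.succ_pos _)]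
    linarith

theorem monotone_qBar (hq : qCond q) : Monotone (qBar q) :=
  monotone_of_strictMono_sub (strictMono_qBar_sub hq) (by simp [qBar_zero, qBar_of_pos])

theorem fS_eq_sum_sub_qBar {n : ℕ} {T : Finset (Fin n)} (hT : T.Nonempty) (y : Fin n → ℝ) :
    fS n q T y = ∑ i ∈ T, y i - (qBar q #T - qBar q 0) := by
  rw [fS, qBar_of_pos hT.card_pos, qBar_zero]
  ring

end QBar

theorem posOutside_inter_iInter_Lhyp_nonempty {n r : ℕ} {q : ℕ → ℕ}
    {S : Fin r → Finset (Fin n)} (hq : qCond q) (hne : ∀ i, (S i).Nonempty) (hS : StrictMono S) :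
    (posOutside n q (Set.range S) ∩ ⋂ i, Lhyp n q (S i)).Nonempty := by
  obtain ⟨y, hon, hoff⟩ := exists_sum_eq_on_chain_and_lt_off_chain (strictMono_qBar_sub hq)
    (monotone_qBar hq) rfl (strictMonoOn_chainOf hne hS)
  refine ⟨y, fun T hT hTS => ?_, Set.mem_iInter.2 fun i => ?_⟩
  · rw [fS_eq_sum_sub_qBar hT, sub_pos]
    exact hoff T (ne_chainOf hT hTS)
  · change fS n q (S i) y = 0
    rw [fS_eq_sum_sub_qBar (hne i), ← chainOf_succ (S := S) i, hon _ (by omega), sub_self]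

end BoundaryStratum

open BoundaryStratum

theorem boundary_stratum_nonempty_convex_relatively_open_general
    (n : ℕ) (q : ℕ → ℕ) (hq : qCond q)
    (r : ℕ) (hr : 1 ≤ r) (S : Fin r → Finset (Fin n))
    (hne : ∀ i, (S i).Nonempty)
    (hchain : ∀ i j : Fin r, i < j → S i ⊂ S j) :
    (frontier (Omega n q) ∩ (⋂ i, Lhyp n q (S i)) ∩
        (⋃ T ∈ {T : Finset (Fin n) | T.Nonempty ∧ T ∉ Set.range S}, Lhyp n q T)ᶜ).Nonempty ∧
    Convex ℝ (frontier (Omega n q) ∩ (⋂ i, Lhyp n q (S i)) ∩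
        (⋃ T ∈ {T : Finset (Fin n) | T.Nonempty ∧ T ∉ Set.range S}, Lhyp n q T)ᶜ) ∧
    (∃ U : Set (Fin n → ℝ), IsOpen U ∧
      frontier (Omega n q) ∩ (⋂ i, Lhyp n q (S i)) ∩
        (⋃ T ∈ {T : Finset (Fin n) | T.Nonempty ∧ T ∉ Set.range S}, Lhyp n q T)ᶜ =
      U ∩ (⋂ i, Lhyp n q (S i))) ∧
    Module.finrank ℝ
      ↥(⨅ i : Fin r, LinearMap.ker (∑ j ∈ S i, (LinearMap.proj j : (Fin n → ℝ) →ₗ[ℝ] ℝ))) =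
      n - r := by
  have hS : StrictMono S := hchain
  rw [stratum_eq hr hne]
  refine ⟨posOutside_inter_iInter_Lhyp_nonempty hq hne hS,
    (convex_posOutside _).inter (convex_iInter fun i => convex_Lhyp _),
    ⟨_, isOpen_posOutside _, rfl⟩, ?_⟩
  simpa using finrank_iInf_ker_sum_proj hne hS

theorem boundary_stratum_nonempty_convex_relatively_open
    (n : ℕ) (hn : 1 ≤ n) (q : ℕ → ℕ) (hq : qCond q)
    (r : ℕ) (hr : 1 ≤ r) (S : Fin r → Finset (Fin n))
    (hne : ∀ i, (S i).Nonempty)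
    (hchain : ∀ i j : Fin r, i < j → S i ⊂ S j) :
    (frontier (Omega n q) ∩ (⋂ i, Lhyp n q (S i)) ∩
        (⋃ T ∈ {T : Finset (Fin n) | T.Nonempty ∧ T ∉ Set.range S}, Lhyp n q T)ᶜ).Nonempty ∧
    Convex ℝ (frontier (Omega n q) ∩ (⋂ i, Lhyp n q (S i)) ∩
        (⋃ T ∈ {T : Finset (Fin n) | T.Nonempty ∧ T ∉ Set.range S}, Lhyp n q T)ᶜ) ∧
    (∃ U : Set (Fin n → ℝ), IsOpen U ∧
      frontier (Omega n q) ∩ (⋂ i, Lhyp n q (S i)) ∩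
        (⋃ T ∈ {T : Finset (Fin n) | T.Nonempty ∧ T ∉ Set.range S}, Lhyp n q T)ᶜ =
      U ∩ (⋂ i, Lhyp n q (S i))) ∧
    Module.finrank ℝ
      ↥(⨅ i : Fin r, LinearMap.ker (∑ j ∈ S i, (LinearMap.proj j : (Fin n → ℝ) →ₗ[ℝ] ℝ))) =
      n - r :=
  boundary_stratum_nonempty_convex_relatively_open_general n q hq r hr S hne hchain
end

section
/- For all y ∈ ℝ^n, the Jacobian determinant of the map F satisfies det(∂F/∂y)(y) = (∏_{∅≠S⊆{1,…,n}} f_S(y)^{|S|−1}) · R(y), where R(y) = Σ_{{S_1,…,S_n}} det(M^{1_{S_1},…,1_{S_n}})² · ∏_{∅≠P∉{S_1,…,S_n}} f_P(y), the sum being over all collections of n distinct nonempty subsets S_1,…,S_n of {1,…,n} and M^{1_{S_1},…,1_{S_n}} denoting the n×n matrix whose columns are the indicator vectors 1_{S_1},…,1_{S_n}. -/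
/-- The map `F : ℝ^n → ℝ^n`, `F_i = ∏_{S ∋ i} f_S`. -/
def Fmap (n : ℕ) (q : ℕ → ℕ) (y : Fin n → ℝ) : Fin n → ℝ := fun i =>
  ∏ S ∈ Finset.univ.filter (fun S : Finset (Fin n) => i ∈ S), fS n q S y

/-- `det(M^{1_{S_1},…,1_{S_n}})²` : the square of the determinant of the matrix whose columns
are the indicator vectors of the members of the collection `𝒮` of `n` distinct subsets
of `{1,…,n}` (in any order; the square is order-independent). -/
noncomputable def detSqCols (n : ℕ) (𝒮 : Finset (Finset (Fin n))) : ℝ :=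
  if h : 𝒮.card = n then
    (Matrix.det (Matrix.of fun i j : Fin n =>
      if i ∈ ((𝒮.equivFin.symm (Fin.cast h.symm j)) : Finset (Fin n)) then (1:ℝ) else 0))^2
  else 0

/-- The polynomial `R(y) = Σ_{{S_1,…,S_n}} det(M^{1_{S_1},…,1_{S_n}})² ∏_{∅≠P∉{S_1,…,S_n}} f_P(y)`,
the sum being over all collections of `n` distinct nonempty subsets of `{1,…,n}`. -/
noncomputable def Rpoly (n : ℕ) (q : ℕ → ℕ) (y : Fin n → ℝ) : ℝ :=
  ∑ 𝒮 ∈ Finset.univ.filter (fun 𝒮 : Finset (Finset (Fin n)) => 𝒮.card = n ∧ ∅ ∉ 𝒮),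
    detSqCols n 𝒮 *
      ∏ P ∈ Finset.univ.filter (fun P : Finset (Fin n) => P.Nonempty ∧ P ∉ 𝒮), fS n q P y

/-!
Differentiating the products row by row, row `i` of the Jacobian is
`∑_{S ∋ i} (∏_{T ∋ i, T ≠ S} f_T) 1_Sᵀ`. Expanding the determinant multilinearly in the rows
gives a sum over choices `i ↦ S_i ∋ i`; only injective choices survive, and these are grouped
by their image `𝒮 = {S_1, …, S_n}`. For such a choice, `f_T` occurs once for each `i ∈ T` with
`S_i ≠ T`, i.e. `|T| - 1` times if `T ∈ 𝒮` and `|T|` times otherwise, so the coefficient depends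
only on `𝒮`. The choices with image `𝒮` are the reorderings `σ` of a fixed enumeration of `𝒮`
for which the `σ`-term of the Leibniz expansion of `det M_𝒮` is nonzero; their determinants
`sign σ · det M_𝒮` therefore add up to `det M_𝒮 ^ 2`.
-/

open Finset

namespace Matrix
variable {R : Type*} [CommRing R] {m : Type*} [Fintype m] [DecidableEq m]

theorem det_of_sum_rows {ι : Type*} (s : m → Finset ι) (c : m → ι → R) (v : ι → m → R) :
    (of fun i j => ∑ k ∈ s i, c i k * v k j).det =
      ∑ g ∈ Fintype.piFinset s, (∏ i, c i (g i)) * (of fun i j => v (g i) j).det := by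
  have hrows : (of fun i j => ∑ k ∈ s i, c i k * v k j) = fun i => ∑ k ∈ s i, c i k • v k := by
    ext i j
    simp [Finset.sum_apply]
  change detRowAlternating.toMultilinearMap _ = _
  rw [hrows, MultilinearMap.map_sum_finset]
  simp only [MultilinearMap.map_smul_univ, smul_eq_mul]
  rfl

theorem det_of_indicator (p : m → m → Prop) [DecidableRel p] :
    (of fun i j => if p i j then (1 : R) else 0).det =
      ∑ σ : Equiv.Perm m with ∀ i, p (σ i) i, (Equiv.Perm.sign σ : R) := by
  rw [det_apply, sum_filter]
  refine sum_congr rfl fun σ _ => ?_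
  split_ifs with h
  · simp [h, Units.smul_def]
  · obtain ⟨i, hi⟩ := not_forall.1 h
    rw [prod_eq_zero (mem_univ i) (by simp [hi]), smul_zero]

end Matrix

section Counting
variable {ι M : Type*} [Fintype ι] [DecidableEq ι] [CommMonoid M]

theorem prod_prod_erase_eq_prod_pow_card (g : ι → Finset ι) (f : Finset ι → M) :
    ∏ i, ∏ T ∈ ({T | i ∈ T} : Finset _).erase (g i), f T = ∏ T, f T ^ #{i ∈ T | g i ≠ T} := by
  rw [prod_comm' (t' := univ) (s' := fun T => {i ∈ T | g i ≠ T}) (by grind)]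
  simp only [prod_const]

theorem card_filter_ne_of_injective {g : ι → Finset ι} (hg : Function.Injective g)
    (hmem : ∀ i, i ∈ g i) (T : Finset ι) :
    #{i ∈ T | g i ≠ T} = if T ∈ image g univ then #T - 1 else #T := by
  split_ifs with hT
  · obtain ⟨i₀, -, rfl⟩ := mem_image.1 hT
    rw [← card_erase_of_mem (hmem i₀)]
    congr 1
    ext i
    simp [hg.ne_iff, and_comm]
  · exact congrArg card (filter_true_of_mem fun i _ h => hT (mem_image.2 ⟨i, mem_univ i, h⟩))

theorem prod_pow_ite_mem_eq {𝒮 : Finset (Finset ι)} (h𝒮 : ∅ ∉ 𝒮) (f : Finset ι → M) :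
    ∏ T, f T ^ (if T ∈ 𝒮 then #T - 1 else #T) =
      (∏ S with S.Nonempty, f S ^ (#S - 1)) * ∏ P with P.Nonempty ∧ P ∉ 𝒮, f P := by
  rw [prod_filter, prod_filter, ← prod_mul_distrib]
  refine prod_congr rfl fun T _ => ?_
  rcases T.eq_empty_or_nonempty with rfl | hT
  · simp [h𝒮]
  · split_ifs with hmem <;> simp_all [← pow_succ, Nat.sub_add_cancel (card_pos.2 hT)]

theorem prod_prod_erase_eq_of_injective {g : ι → Finset ι} (hg : Function.Injective g)
    (hmem : ∀ i, i ∈ g i) (f : Finset ι → M) :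
    ∏ i, ∏ T ∈ ({T | i ∈ T} : Finset _).erase (g i), f T =
      (∏ S with S.Nonempty, f S ^ (#S - 1)) * ∏ P with P.Nonempty ∧ P ∉ image g univ, f P := by
  have hempty : ∅ ∉ image g univ := fun h => by
    obtain ⟨i, -, hi⟩ := mem_image.1 h
    simpa [hi] using hmem i
  simp only [prod_prod_erase_eq_prod_pow_card, card_filter_ne_of_injective hg hmem,
    prod_pow_ite_mem_eq hempty]

end Counting

section Fibers
variable {R ι : Type*} [CommRing R] [Fintype ι] [DecidableEq ι]

theorem injective_of_image_eq {𝒮 : Finset (Finset ι)} (e : ι ≃ 𝒮) {g : ι → Finset ι}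
    (hg : image g univ = 𝒮) : Function.Injective g := by
  have hcard : #(image g univ) = #(univ : Finset ι) := by
    rw [hg, card_univ, ← Fintype.card_coe, Fintype.card_congr e]
  simpa using card_image_iff.1 hcard

theorem sum_det_indicator_rows_of_image_eq {𝒮 : Finset (Finset ι)} (e : ι ≃ 𝒮) :
    ∑ g ∈ Fintype.piFinset (fun i => ({S | i ∈ S} : Finset _)) with image g univ = 𝒮,
      (Matrix.of fun i j => if j ∈ g i then (1 : R) else 0).det =
      (Matrix.of fun i j => if j ∈ (e i : Finset ι) then (1 : R) else 0).det ^ 2 := by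
  have himage (σ : Equiv.Perm ι) : image (fun i => (e (σ i) : Finset ι)) univ = 𝒮 := by
    ext S
    simp only [mem_image, mem_univ, true_and]
    exact ⟨by rintro ⟨i, rfl⟩; exact (e (σ i)).2,
      fun hS => ⟨σ.symm (e.symm ⟨S, hS⟩), by simp⟩⟩
  rw [sq]
  nth_rw 1 [Matrix.det_of_indicator (fun i j => j ∈ (e i : Finset ι))]
  rw [sum_mul]
  refine (sum_bij (fun σ _ i => (e (σ i) : Finset ι)) (fun σ hσ => ?_) (fun σ₁ _ σ₂ _ h => ?_)
    (fun g hg => ?_) (fun σ _ => (Matrix.det_permute σ _).symm)).symm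
  · simp only [mem_filter] at hσ ⊢
    exact ⟨Fintype.mem_piFinset.2 fun i => by simpa using hσ.2 i, himage σ⟩
  · ext i
    simpa [Subtype.coe_inj] using congrFun h i
  · simp only [mem_filter, Fintype.mem_piFinset, mem_univ, true_and] at hg
    let g' : ι → 𝒮 := fun i => ⟨g i, hg.2 ▸ mem_image_of_mem g (mem_univ i)⟩
    have hg' : Function.Injective g' := fun a b h =>
      injective_of_image_eq e hg.2 (congrArg Subtype.val h)
    have hbij : Function.Bijective g' :=
      (Fintype.bijective_iff_injective_and_card g').2 ⟨hg', Fintype.card_congr e⟩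
    refine ⟨(Equiv.ofBijective g' hbij).trans e.symm, ?_, ?_⟩
    · simpa [g'] using hg.1
    · ext i : 1
      simp [g']

theorem sum_prod_erase_mul_det_of_image_eq {𝒮 : Finset (Finset ι)} (e : ι ≃ 𝒮) (f : Finset ι → R) :
    ∑ g ∈ Fintype.piFinset (fun i => ({S | i ∈ S} : Finset _)) with image g univ = 𝒮,
      (∏ i, ∏ T ∈ ({T | i ∈ T} : Finset _).erase (g i), f T) *
        (Matrix.of fun i j => if j ∈ g i then (1 : R) else 0).det =
      (∏ S with S.Nonempty, f S ^ (#S - 1)) *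
        ((Matrix.of fun i j => if j ∈ (e i : Finset ι) then (1 : R) else 0).det ^ 2 *
          ∏ P with P.Nonempty ∧ P ∉ 𝒮, f P) := by
  rw [← sum_det_indicator_rows_of_image_eq e, sum_mul, mul_sum]
  refine sum_congr rfl fun g hg => ?_
  simp only [mem_filter, Fintype.mem_piFinset, mem_univ, true_and] at hg
  rw [prod_prod_erase_eq_of_injective (injective_of_image_eq e hg.2) hg.1, hg.2]
  ring

theorem sum_mul_det_of_image_eq_eq_zero {𝒮 : Finset (Finset ι)} (h : ¬(#𝒮 = Fintype.card ι ∧ ∅ ∉ 𝒮))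
    (c : (ι → Finset ι) → R) :
    ∑ g ∈ Fintype.piFinset (fun i => ({S | i ∈ S} : Finset _)) with image g univ = 𝒮,
      c g * (Matrix.of fun i j => if j ∈ g i then (1 : R) else 0).det = 0 := by
  refine sum_eq_zero fun g hg => ?_
  simp only [mem_filter, Fintype.mem_piFinset, mem_univ, true_and] at hg
  by_cases hinj : Function.Injective g
  · refine absurd ⟨?_, fun h0 => ?_⟩ h
    · rw [← hg.2, card_image_of_injective _ hinj, card_univ]
    · obtain ⟨i, -, hi⟩ := mem_image.1 (hg.2 ▸ h0)
      simpa [hi] using hg.1 i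
  · obtain ⟨a, b, hab, hne⟩ := Function.not_injective_iff.1 hinj
    rw [Matrix.det_zero_of_row_eq hne (funext fun j => by simp [hab]), mul_zero]

end Fibers

section Jacobian
variable {n : ℕ} (q : ℕ → ℕ) (y : Fin n → ℝ)

theorem hasFDerivAt_fS (S : Finset (Fin n)) :
    HasFDerivAt (fS n q S) (∑ j ∈ S, ContinuousLinearMap.proj (R := ℝ) (φ := fun _ ↦ ℝ) j) y :=
  (HasFDerivAt.fun_sum fun i _ => hasFDerivAt_apply i y).const_add _

theorem det_fderiv_Fmap :
    LinearMap.det (fderiv ℝ (Fmap n q) y).toLinearMap =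
      (Matrix.of fun i j => ∑ S ∈ ({S | i ∈ S} : Finset _),
        (∏ T ∈ ({T | i ∈ T} : Finset _).erase S, fS n q T y) *
          if j ∈ S then (1 : ℝ) else 0).det := by
  have hF : HasFDerivAt (Fmap n q) (ContinuousLinearMap.pi fun i =>
      ∑ S ∈ ({S | i ∈ S} : Finset _), (∏ T ∈ ({T | i ∈ T} : Finset _).erase S, fS n q T y) •
        ∑ j ∈ S, ContinuousLinearMap.proj (R := ℝ) (φ := fun _ ↦ ℝ) j) y :=
    hasFDerivAt_pi.2 fun i => HasFDerivAt.finsetProd fun S _ => hasFDerivAt_fS q y S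
  rw [hF.fderiv, ← LinearMap.det_toMatrix']
  congr 1
  ext i j
  simp [LinearMap.toMatrix'_apply, mul_comm]

theorem detSqCols_eq {𝒮 : Finset (Finset (Fin n))} (h : #𝒮 = n) :
    detSqCols n 𝒮 = (Matrix.of fun i j =>
      if j ∈ ((finCongr h.symm).trans 𝒮.equivFin.symm i : Finset _) then (1 : ℝ) else 0).det ^ 2 := by
  rw [detSqCols, dif_pos h, ← Matrix.det_transpose]
  rfl

end Jacobian

theorem jacobian_determinant_factorization_general
    (n : ℕ) (q : ℕ → ℕ) (y : Fin n → ℝ) :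
    LinearMap.det ((fderiv ℝ (Fmap n q) y).toLinearMap) =
      (∏ S ∈ Finset.univ.filter (fun S : Finset (Fin n) => S.Nonempty),
        fS n q S y ^ (S.card - 1)) * Rpoly n q y := by
  have hvanish (𝒮 : Finset (Finset (Fin n))) (h : ¬(#𝒮 = n ∧ ∅ ∉ 𝒮)) :=
    sum_mul_det_of_image_eq_eq_zero (R := ℝ) (𝒮 := 𝒮) (by simpa using h)
  rw [det_fderiv_Fmap, Matrix.det_of_sum_rows,
    ← sum_fiberwise_of_maps_to (g := fun g => image g univ) (t := univ) fun _ _ => mem_univ _,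
    ← sum_filter_of_ne fun 𝒮 _ hne => by_contra fun h => hne (hvanish 𝒮 h _), Rpoly, mul_sum]
  refine sum_congr rfl fun 𝒮 h𝒮 => ?_
  have hcard : #𝒮 = n := (mem_filter.1 h𝒮).2.1
  rw [sum_prod_erase_mul_det_of_image_eq ((finCongr hcard.symm).trans 𝒮.equivFin.symm), detSqCols_eq hcard]

theorem jacobian_determinant_factorization
    (n : ℕ) (hn : 1 ≤ n) (q : ℕ → ℕ) (hq : qCond q) (y : Fin n → ℝ) :
    LinearMap.det ((fderiv ℝ (Fmap n q) y).toLinearMap) =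
      (∏ S ∈ Finset.univ.filter (fun S : Finset (Fin n) => S.Nonempty),
        fS n q S y ^ (S.card - 1)) * Rpoly n q y :=
  jacobian_determinant_factorization_general n q y
end

section
/- Let (c_S) be a family of real numbers indexed by the nonempty subsets S of {1,…,n}, and let A be the n×n matrix A = Σ_{∅≠S⊆{1,…,n}} c_S · 1_S 1_Sᵀ, where 1_S 1_Sᵀ is the matrix whose (i,j) entry is 1 if i,j ∈ S and 0 otherwise. Then det A = Σ_{{S_1,…,S_n}} (∏_{i=1}^n c_{S_i}) · det(M^{1_{S_1},…,1_{S_n}})², the sum being over all collections of n distinct nonempty subsets S_1,…,S_n of {1,…,n}, where M^{1_{S_1},…,1_{S_n}} is the n×n matrix whose columns are 1_{S_1},…,1_{S_n}. -/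
/-!
The matrix is `M * diagonal c * Mᵀ`, where the columns of `M` are the indicator vectors `1_S`,
so the theorem is the Cauchy–Binet formula for this product. Expanding `det (A * B)`
multilinearly in its columns gives a sum over all maps `f` from the columns of `A * B` to those
of `A`; a non-injective `f` repeats a column of `A`, and an injective one is an enumeration of
its image composed with a permutation, whose signs reassemble the determinant of the
corresponding rows of `B`. The empty set gives a zero column, so collections containing it
drop out.
-/

open Finset Equiv Matrix

namespace Finset

variable {m : Type*} {k : ℕ}

/-- The enumeration of `T` that `detSqCols` uses, so that `detSqCols_eq` holds by `rfl`. -/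
noncomputable def enumOfCard (T : {T : Finset m // T.card = k}) : Fin k → m :=
  Subtype.val ∘ (finCongr T.2.symm).trans T.1.equivFin.symm

theorem enumOfCard_injective (T : {T : Finset m // T.card = k}) :
    Function.Injective (enumOfCard T) :=
  Subtype.val_injective.comp (Equiv.injective _)

theorem range_enumOfCard (T : {T : Finset m // T.card = k}) :
    Set.range (enumOfCard T) = T.1 := by
  rw [enumOfCard, Set.range_comp, Equiv.range_eq_univ, Set.image_univ, Subtype.range_coe]

theorem prod_enumOfCard {M : Type*} [CommMonoid M] (T : {T : Finset m // T.card = k})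
    (f : m → M) :
    ∏ j, f (enumOfCard T j) = ∏ x ∈ T.1, f x := by
  rw [← prod_coe_sort T.1]
  exact ((finCongr T.2.symm).trans T.1.equivFin.symm).prod_comp fun x => f x

theorem exists_perm_enumOfCard_comp_eq (T : {T : Finset m // T.card = k}) {f : Fin k → m}
    (hf : Function.Injective f) (hT : Set.range f = T.1) :
    ∃ σ : Perm (Fin k), enumOfCard T ∘ σ = f := by
  have hmem (j : Fin k) : f j ∈ T.1 := by rw [← Finset.mem_coe, ← hT]; exact ⟨j, rfl⟩
  set e := (finCongr T.2.symm).trans T.1.equivFin.symm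
  have hinj : Function.Injective fun j => e.symm ⟨f j, hmem j⟩ :=
    fun i j h => hf (congrArg Subtype.val (e.symm.injective h))
  refine ⟨ofBijective _ (Finite.injective_iff_bijective.mp hinj), funext fun j => ?_⟩
  simp [enumOfCard, e]

end Finset

namespace Matrix

variable {n m R : Type*} [Fintype n] [DecidableEq n] [CommRing R]

theorem det_mul_eq_sum_det_submatrix [Fintype m] (A : Matrix n m R) (B : Matrix m n R) :
    det (A * B) = ∑ f : n → m, det (A.submatrix id f) * ∏ i, B (f i) i := by
  simp only [det_apply', mul_apply, prod_univ_sum, Fintype.piFinset_univ, submatrix_apply, id,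
    mul_sum, sum_mul, prod_mul_distrib]
  rw [sum_comm]
  refine sum_congr rfl fun f _ => sum_congr rfl fun σ _ => by ring

theorem det_submatrix_eq_zero_of_not_injective (A : Matrix n m R) {f : n → m}
    (hf : ¬ Function.Injective f) : det (A.submatrix id f) = 0 := by
  obtain ⟨i, j, hij, hne⟩ := Function.not_injective_iff.mp hf
  exact det_zero_of_column_eq hne fun k => by simp [hij]

theorem sum_perm_det_submatrix_mul_prod (A : Matrix n m R) (B : Matrix m n R) (e : n → m) :
    ∑ σ : Perm n, det (A.submatrix id (e ∘ σ)) * ∏ i, B (e (σ i)) i =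
      det (A.submatrix id e) * det (B.submatrix e id) := by
  have hperm (σ : Perm n) : det (A.submatrix id (e ∘ σ)) = Perm.sign σ * det (A.submatrix id e) :=
    det_permute' σ (A.submatrix id e)
  simp only [hperm, det_apply' (B.submatrix e id), mul_sum, submatrix_apply, id]
  exact sum_congr rfl fun σ _ => by ring

theorem det_mul_eq_sum_enumOfCard {k : ℕ} [Fintype m] [DecidableEq m] (A : Matrix (Fin k) m R)
    (B : Matrix m (Fin k) R) :
    det (A * B) = ∑ T : {T : Finset m // T.card = k},
      det (A.submatrix id (enumOfCard T)) * det (B.submatrix (enumOfCard T) id) := by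
  have hsupp : ∑ f : Fin k → m, det (A.submatrix id f) * ∏ i, B (f i) i =
      ∑ f with Function.Injective f, det (A.submatrix id f) * ∏ i, B (f i) i :=
    (sum_filter_of_ne fun f _ h => not_not.mp fun hf =>
      h (by rw [det_submatrix_eq_zero_of_not_injective A hf, zero_mul])).symm
  simp_rw [det_mul_eq_sum_det_submatrix, hsupp, ← sum_perm_det_submatrix_mul_prod,
    ← Fintype.sum_prod_type']
  symm
  refine sum_nbij (fun p => enumOfCard p.1 ∘ p.2) ?_ ?_ ?_ fun _ _ => rfl
  · intro p _
    simpa using (enumOfCard_injective p.1).comp p.2.injective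
  · rintro ⟨T, σ⟩ - ⟨T', σ'⟩ - (h : enumOfCard T ∘ σ = enumOfCard T' ∘ σ')
    have hT : T = T' := Subtype.ext <| coe_injective <| by
      rw [← range_enumOfCard, ← range_enumOfCard, ← EquivLike.range_comp (enumOfCard T) σ, h,
        EquivLike.range_comp]
    subst hT
    simp only [Prod.mk.injEq, true_and]
    exact Equiv.ext fun j => enumOfCard_injective T (congrFun h j)
  · intro f hf
    have hf : Function.Injective f := by simpa using hf
    let T : {T : Finset m // T.card = k} :=
      ⟨univ.image f, by rw [card_image_of_injective _ hf, card_fin]⟩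
    obtain ⟨σ, hσ⟩ := exists_perm_enumOfCard_comp_eq T hf (by simp [T])
    exact ⟨(T, σ), mem_coe.mpr (mem_univ _), hσ⟩

theorem det_mul_diagonal_mul_transpose {k : ℕ} [Fintype m] [DecidableEq m]
    (M : Matrix (Fin k) m R) (d : m → R) :
    det (M * diagonal d * Mᵀ) = ∑ T : {T : Finset m // T.card = k},
      (∏ x ∈ T.1, d x) * det (M.submatrix id (enumOfCard T)) ^ 2 := by
  rw [Matrix.mul_assoc, det_mul_eq_sum_enumOfCard]
  refine sum_congr rfl fun T _ => ?_
  have hrows : (diagonal d * Mᵀ).submatrix (enumOfCard T) id =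
      of fun i j => d (enumOfCard T i) * (M.submatrix id (enumOfCard T))ᵀ i j := by
    ext i j
    simp [diagonal_mul]
  rw [hrows, det_mul_column, det_transpose, prod_enumOfCard]
  ring

def memIndicator (α R : Type*) [DecidableEq α] [Zero R] [One R] : Matrix α (Finset α) R :=
  of fun i S => if i ∈ S then 1 else 0

end Matrix

theorem detSqCols_eq_s11 {n : ℕ} (T : {T : Finset (Finset (Fin n)) // T.card = n}) :
    detSqCols n T.1 = det ((memIndicator (Fin n) ℝ).submatrix id (enumOfCard T)) ^ 2 := by
  rw [detSqCols, dif_pos T.2]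
  rfl

theorem detSqCols_eq_zero_of_empty_mem {n : ℕ} {𝒮 : Finset (Finset (Fin n))} (h𝒮 : ∅ ∈ 𝒮) :
    detSqCols n 𝒮 = 0 := by
  by_cases hcard : 𝒮.card = n
  · obtain ⟨j, hj⟩ : ∅ ∈ Set.range (enumOfCard ⟨𝒮, hcard⟩) := by rw [range_enumOfCard]; exact h𝒮
    rw [detSqCols_eq_s11 ⟨𝒮, hcard⟩,
      det_eq_zero_of_column_eq_zero j fun i => by simp [memIndicator, hj], zero_pow two_ne_zero]
  · rw [detSqCols, dif_neg hcard]

theorem of_sum_nonempty_eq_memIndicator_mul_diagonal_mul_transpose {α R : Type*} [Fintype α]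
    [DecidableEq α] [CommRing R] (c : Finset α → R) :
    (of fun i j : α => ∑ S ∈ univ.filter (fun S : Finset α => S.Nonempty),
        (if i ∈ S ∧ j ∈ S then c S else 0)) =
      memIndicator α R * diagonal c * (memIndicator α R)ᵀ := by
  ext i j
  rw [of_apply, sum_filter_of_ne fun S _ h => ⟨i, by by_contra hi; simp [hi] at h⟩, mul_apply]
  simp only [mul_diagonal, transpose_apply, memIndicator, of_apply]
  refine sum_congr rfl fun S _ => by split_ifs <;> simp_all

theorem det_sum_of_rank_one_indicator_matrices_general
    (n : ℕ) (c : Finset (Fin n) → ℝ) :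
    Matrix.det (Matrix.of fun i j : Fin n =>
        ∑ S ∈ Finset.univ.filter (fun S : Finset (Fin n) => S.Nonempty),
          (if i ∈ S ∧ j ∈ S then c S else 0)) =
      ∑ 𝒮 ∈ Finset.univ.filter (fun 𝒮 : Finset (Finset (Fin n)) => 𝒮.card = n ∧ ∅ ∉ 𝒮),
        (∏ S ∈ 𝒮, c S) * detSqCols n 𝒮 := by
  have hempty : ∀ 𝒮 ∈ univ.filter (fun 𝒮 : Finset (Finset (Fin n)) => 𝒮.card = n),
      (∏ S ∈ 𝒮, c S) * detSqCols n 𝒮 ≠ 0 → ∅ ∉ 𝒮 := fun 𝒮 _ h h𝒮 =>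
    h (by rw [detSqCols_eq_zero_of_empty_mem h𝒮, mul_zero])
  rw [of_sum_nonempty_eq_memIndicator_mul_diagonal_mul_transpose,
    det_mul_diagonal_mul_transpose, ← filter_filter, sum_filter_of_ne hempty,
    sum_subtype (p := fun 𝒮 : Finset (Finset (Fin n)) => 𝒮.card = n) (F := inferInstance) _
      (by simp)]
  simp_rw [detSqCols_eq_s11]

theorem det_sum_of_rank_one_indicator_matrices
    (n : ℕ) (hn : 1 ≤ n) (c : Finset (Fin n) → ℝ) :
    Matrix.det (Matrix.of fun i j : Fin n =>
        ∑ S ∈ Finset.univ.filter (fun S : Finset (Fin n) => S.Nonempty),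
          (if i ∈ S ∧ j ∈ S then c S else 0)) =
      ∑ 𝒮 ∈ Finset.univ.filter (fun 𝒮 : Finset (Finset (Fin n)) => 𝒮.card = n ∧ ∅ ∉ 𝒮),
        (∏ S ∈ 𝒮, c S) * detSqCols n 𝒮 :=
  det_sum_of_rank_one_indicator_matrices_general n c
end

section
/- The polynomial map F restricted to Ω is a diffeomorphism from Ω onto the open orthant (0,∞)^n: F maps Ω bijectively onto (0,∞)^n and its Jacobian determinant is nonzero (indeed strictly positive) at every point of Ω. -/
open Finset Matrix

def SS (n : ℕ) (i : Fin n) : Finset (Finset (Fin n)) :=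
  Finset.univ.filter (fun S : Finset (Fin n) => i ∈ S)

lemma mem_SS {n : ℕ} {i : Fin n} {S : Finset (Fin n)} : S ∈ SS n i ↔ i ∈ S := by
  simp [SS]

noncomputable def linS (n : ℕ) (S : Finset (Fin n)) : (Fin n → ℝ) →L[ℝ] ℝ :=
  ∑ i ∈ S, ContinuousLinearMap.proj i

lemma linS_apply {n : ℕ} (S : Finset (Fin n)) (y : Fin n → ℝ) :
    linS n S y = ∑ i ∈ S, y i := by
  simp [linS]

lemma fS_hasStrict {n : ℕ} (q : ℕ → ℕ) (S : Finset (Fin n)) (y : Fin n → ℝ) :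
    HasStrictFDerivAt (fS n q S) (linS n S) y := by
  have hfun : fS n q S = fun z => -(q S.card : ℝ) + linS n S z := by
    funext z; rw [linS_apply]; rfl
  rw [hfun]
  exact ((linS n S).hasStrictFDerivAt).const_add _

noncomputable def Dcoord (n : ℕ) (q : ℕ → ℕ) (y : Fin n → ℝ) (i : Fin n) :
    (Fin n → ℝ) →L[ℝ] ℝ :=
  ∑ S ∈ SS n i, (∏ T ∈ (SS n i).erase S, fS n q T y) • linS n S

lemma Fmap_coord_hasStrict {n : ℕ} (q : ℕ → ℕ) (y : Fin n → ℝ) (i : Fin n) :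
    HasStrictFDerivAt (fun z => Fmap n q z i) (Dcoord n q y i) y := by
  exact HasStrictFDerivAt.finset_prod (fun S _ => fS_hasStrict q S y)

noncomputable def Dmap (n : ℕ) (q : ℕ → ℕ) (y : Fin n → ℝ) :
    (Fin n → ℝ) →L[ℝ] (Fin n → ℝ) :=
  ContinuousLinearMap.pi (Dcoord n q y)

lemma Fmap_hasStrict {n : ℕ} (q : ℕ → ℕ) (y : Fin n → ℝ) :
    HasStrictFDerivAt (Fmap n q) (Dmap n q y) y :=
  hasStrictFDerivAt_pi.mpr fun i => Fmap_coord_hasStrict q y i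

lemma fderiv_Fmap {n : ℕ} (q : ℕ → ℕ) (y : Fin n → ℝ) :
    fderiv ℝ (Fmap n q) y = Dmap n q y :=
  (Fmap_hasStrict q y).hasFDerivAt.fderiv

noncomputable def Bmat (n : ℕ) (q : ℕ → ℕ) (y : Fin n → ℝ) : Matrix (Fin n) (Fin n) ℝ :=
  Matrix.of fun i j => ∑ S ∈ Finset.univ.filter
    (fun S : Finset (Fin n) => i ∈ S ∧ j ∈ S), (fS n q S y)⁻¹

lemma quadB {n : ℕ} (q : ℕ → ℕ) (y x : Fin n → ℝ) :
    x ⬝ᵥ (Bmat n q y) *ᵥ x = ∑ S : Finset (Fin n), (fS n q S y)⁻¹ * (∑ i ∈ S, x i)^2 := by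
  set c : Finset (Fin n) → ℝ := fun S => (fS n q S y)⁻¹ with hc
  show (x ⬝ᵥ (Matrix.of fun i j => ∑ S ∈ Finset.univ.filter
        (fun S : Finset (Fin n) => i ∈ S ∧ j ∈ S), c S) *ᵥ x)
      = ∑ S : Finset (Fin n), c S * (∑ i ∈ S, x i)^2
  simp only [dotProduct, Matrix.mulVec, Matrix.of_apply,
    Finset.sum_filter, Finset.mul_sum, Finset.sum_mul]
  have h1 : ∀ i : Fin n, (∑ j : Fin n, ∑ S : Finset (Fin n),
      x i * ((if i ∈ S ∧ j ∈ S then c S else 0) * x j))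
      = ∑ S : Finset (Fin n), ∑ j : Fin n,
        x i * ((if i ∈ S ∧ j ∈ S then c S else 0) * x j) := fun i => Finset.sum_comm
  simp only [h1]
  rw [Finset.sum_comm]
  refine Finset.sum_congr rfl fun S _ => ?_
  have h2 : ∀ i : Fin n, (∑ j : Fin n,
      x i * ((if i ∈ S ∧ j ∈ S then c S else 0) * x j))
      = if i ∈ S then x i * (c S * ∑ j ∈ S, x j) else 0 := by
    intro i
    by_cases hi : i ∈ S
    · simp only [hi, true_and, if_true, Finset.mul_sum]
      rw [← Finset.sum_filter_of_ne (p := (· ∈ S))]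
      · rw [Finset.filter_mem_eq_inter, Finset.univ_inter]
        exact Finset.sum_congr rfl fun j hj => by simp [hj]
      · intro j _ h; by_contra hj; exact h (by simp [hj])
    · simp [hi]
  simp only [h2]
  rw [← Finset.sum_filter_of_ne (p := (· ∈ S))
    (by intro i _ h; by_contra hi; exact h (by simp [hi]))]
  rw [Finset.filter_mem_eq_inter, Finset.univ_inter]
  rw [Finset.sum_congr rfl (fun i (hi : i ∈ S) => if_pos hi), ← Finset.sum_mul]
  ring

lemma Bmat_posDef {n : ℕ} {q : ℕ → ℕ} {y : Fin n → ℝ} (hy : y ∈ Omega n q) :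
    (Bmat n q y).PosDef := by
  rw [Matrix.posDef_iff_dotProduct_mulVec]
  constructor
  · ext i j
    simp only [Matrix.conjTranspose_apply, Bmat, Matrix.of_apply, star_trivial]
    exact Finset.sum_congr (by simp [and_comm]) fun _ _ => rfl
  · intro x hx
    rw [star_trivial, quadB]
    obtain ⟨i, hi⟩ : ∃ i, x i ≠ 0 := by
      by_contra h; push_neg at h; exact hx (funext h)
    apply Finset.sum_pos'
    · intro S _
      rcases S.eq_empty_or_nonempty with h | h
      · simp [h]
      · exact mul_nonneg (inv_nonneg.mpr (hy S h).le) (sq_nonneg _)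
    · exact ⟨{i}, Finset.mem_univ _, by
        have h1 : (0:ℝ) < fS n q {i} y := hy {i} ⟨i, Finset.mem_singleton_self i⟩
        have : (0:ℝ) < (fS n q {i} y)⁻¹ := inv_pos.mpr h1
        simp only [Finset.sum_singleton]
        positivity⟩

lemma Fmap_pos {n : ℕ} {q : ℕ → ℕ} {y : Fin n → ℝ} (hy : y ∈ Omega n q) (i : Fin n) :
    0 < Fmap n q y i :=
  Finset.prod_pos fun S hS => hy S ⟨i, (Finset.mem_filter.mp hS).2⟩

lemma toMatrix_Dmap {n : ℕ} {q : ℕ → ℕ} {y : Fin n → ℝ} (hy : y ∈ Omega n q) :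
    LinearMap.toMatrix' ((Dmap n q y) : (Fin n → ℝ) →ₗ[ℝ] (Fin n → ℝ))
      = Matrix.diagonal (Fmap n q y) * Bmat n q y := by
  ext i j
  rw [Matrix.diagonal_mul, LinearMap.toMatrix'_apply]
  simp only [ContinuousLinearMap.coe_coe]
  rw [show ∀ v, Dmap n q y v i = Dcoord n q y i v from fun v => rfl]
  rw [Dcoord, ContinuousLinearMap.sum_apply]
  simp only [ContinuousLinearMap.smul_apply, linS_apply, smul_eq_mul, Pi.single_apply]
  have hsum : ∀ S : Finset (Fin n),
      (∑ k ∈ S, if k = j then (1:ℝ) else 0) = if j ∈ S then 1 else 0 :=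
    fun S => Finset.sum_ite_eq' S j (fun _ => (1:ℝ))
  simp only [hsum]
  have hc : ∀ S ∈ SS n i, (∏ T ∈ (SS n i).erase S, fS n q T y)
      = Fmap n q y i * (fS n q S y)⁻¹ := by
    intro S hS
    have hne : fS n q S y ≠ 0 := (hy S ⟨i, mem_SS.mp hS⟩).ne'
    rw [eq_mul_inv_iff_mul_eq₀ hne, Finset.prod_erase_mul _ _ hS]
    rfl
  rw [Finset.sum_congr rfl (fun S hS => by rw [hc S hS])]
  rw [Bmat]; simp only [Matrix.of_apply]
  rw [show (Finset.univ.filter fun S : Finset (Fin n) => i ∈ S ∧ j ∈ S)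
      = (SS n i).filter (fun S => j ∈ S) by rw [SS, Finset.filter_filter]]
  rw [Finset.sum_filter, Finset.mul_sum]
  exact Finset.sum_congr rfl fun S _ => by split_ifs <;> simp

lemma det_Dmap_pos {n : ℕ} {q : ℕ → ℕ} {y : Fin n → ℝ} (hy : y ∈ Omega n q) :
    0 < LinearMap.det ((Dmap n q y) : (Fin n → ℝ) →ₗ[ℝ] (Fin n → ℝ)) := by
  rw [← LinearMap.det_toMatrix', toMatrix_Dmap hy, Matrix.det_mul, Matrix.det_diagonal]
  exact mul_pos (Finset.prod_pos fun i _ => Fmap_pos hy i) (Bmat_posDef hy).det_pos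

lemma swap_sum {n : ℕ} (g : Fin n → Finset (Fin n) → ℝ) :
    (∑ i : Fin n, ∑ S ∈ SS n i, g i S) = ∑ S : Finset (Fin n), ∑ i ∈ S, g i S := by
  simp only [SS, Finset.sum_filter]
  rw [Finset.sum_comm]
  refine Finset.sum_congr rfl fun S _ => ?_
  rw [← Finset.sum_filter, Finset.filter_mem_eq_inter, Finset.univ_inter]

lemma fS_sub {n : ℕ} (q : ℕ → ℕ) (S : Finset (Fin n)) (y y' : Fin n → ℝ) :
    fS n q S y - fS n q S y' = ∑ i ∈ S, (y i - y' i) := by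
  simp only [fS]
  rw [Finset.sum_sub_distrib]
  ring

lemma Fmap_injOn {n : ℕ} (q : ℕ → ℕ) : Set.InjOn (Fmap n q) (Omega n q) := by
  intro y hy y' hy' hF
  have hpos : ∀ S : Finset (Fin n), S.Nonempty → 0 < fS n q S y := hy
  have hpos' : ∀ S : Finset (Fin n), S.Nonempty → 0 < fS n q S y' := hy'
  set Δ : Finset (Fin n) → ℝ :=
    fun S => Real.log (fS n q S y) - Real.log (fS n q S y') with hΔ
  have hlog : ∀ i, ∑ S ∈ SS n i, Δ S = 0 := by
    intro i
    have h1 : Real.log (Fmap n q y i) = ∑ S ∈ SS n i, Real.log (fS n q S y) :=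
      Real.log_prod (fun S hS => (hy S ⟨i, mem_SS.mp hS⟩).ne')
    have h2 : Real.log (Fmap n q y' i) = ∑ S ∈ SS n i, Real.log (fS n q S y') :=
      Real.log_prod (fun S hS => (hy' S ⟨i, mem_SS.mp hS⟩).ne')
    have h3 : Fmap n q y i = Fmap n q y' i := congrFun hF i
    rw [Finset.sum_sub_distrib, ← h1, ← h2, h3, sub_self]
  have key : ∑ S : Finset (Fin n), Δ S * (fS n q S y - fS n q S y') = 0 := by
    have h0 : (∑ i : Fin n, ∑ S ∈ SS n i, Δ S * (y i - y' i)) = 0 := by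
      refine Finset.sum_eq_zero fun i _ => ?_
      rw [← Finset.sum_mul, hlog i, zero_mul]
    rw [swap_sum] at h0
    rw [← h0]
    refine Finset.sum_congr rfl fun S _ => ?_
    rw [fS_sub, Finset.mul_sum]
  have hnonneg : ∀ S ∈ (Finset.univ : Finset (Finset (Fin n))),
      0 ≤ Δ S * (fS n q S y - fS n q S y') := by
    intro S _
    simp only [hΔ]
    rcases S.eq_empty_or_nonempty with h | h
    · subst h; simp [fS]
    · have ha := hpos S h
      have hb := hpos' S h
      rcases le_total (fS n q S y) (fS n q S y') with hle | hle
      · nlinarith [sub_nonpos.mpr (Real.log_le_log ha hle), sub_nonpos.mpr hle]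
      · exact mul_nonneg (sub_nonneg.mpr (Real.log_le_log hb hle)) (sub_nonneg.mpr hle)
  have hzero := (Finset.sum_eq_zero_iff_of_nonneg hnonneg).mp key
  funext i
  have hi := hzero {i} (Finset.mem_univ _)
  have hay : (0:ℝ) < fS n q {i} y := hpos {i} ⟨i, Finset.mem_singleton_self i⟩
  have hby : (0:ℝ) < fS n q {i} y' := hpos' {i} ⟨i, Finset.mem_singleton_self i⟩
  by_contra hne
  have hsub : fS n q {i} y - fS n q {i} y' = y i - y' i := by
    rw [fS_sub, Finset.sum_singleton]
  rcases lt_or_gt_of_ne (sub_ne_zero.mpr hne) with hlt | hgt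
  · -- y i - y' i < 0
    have h1 : fS n q {i} y < fS n q {i} y' := by
      have := hsub; nlinarith
    have h2 : Δ {i} < 0 := sub_neg.mpr (Real.log_lt_log hay h1)
    have : 0 < Δ {i} * (fS n q {i} y - fS n q {i} y') :=
      mul_pos_of_neg_of_neg h2 (by rw [hsub]; exact hlt)
    exact absurd hi (ne_of_gt this)
  · have h1 : fS n q {i} y' < fS n q {i} y := by
      have := hsub; nlinarith
    have h2 : 0 < Δ {i} := sub_pos.mpr (Real.log_lt_log hby h1)
    have : 0 < Δ {i} * (fS n q {i} y - fS n q {i} y') :=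
      mul_pos h2 (by rw [hsub]; exact hgt)
    exact absurd hi (ne_of_gt this)

lemma fS_cont {n : ℕ} (q : ℕ → ℕ) (S : Finset (Fin n)) : Continuous (fS n q S) := by
  show Continuous fun y : Fin n → ℝ => -(q S.card : ℝ) + ∑ i ∈ S, y i
  exact continuous_const.add (continuous_finset_sum S fun i _ => continuous_apply i)

lemma Fmap_cont {n : ℕ} (q : ℕ → ℕ) : Continuous (Fmap n q) :=
  continuous_pi fun i => continuous_finset_prod _ fun S _ => fS_cont q S

lemma q_mono (q : ℕ → ℕ) (hq : qCond q) : Monotone q :=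
  monotone_nat_of_le_succ fun a =>
    le_trans (Nat.le_mul_of_pos_left _ (by norm_num)) (hq.2.2 a)

lemma coord_lower {n : ℕ} {q : ℕ → ℕ} {y : Fin n → ℝ} (hy : y ∈ Omega n q) (j : Fin n) :
    (q 1 : ℝ) < y j := by
  have h := hy {j} ⟨j, Finset.mem_singleton_self j⟩
  simp only [fS, Finset.card_singleton, Finset.sum_singleton] at h
  linarith

lemma omega_open {n : ℕ} (q : ℕ → ℕ) : IsOpen (Omega n q) := by
  have : Omega n q = ⋂ S : Finset (Fin n), {y | S.Nonempty → 0 < fS n q S y} := by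
    ext y; simp [Omega, Set.mem_iInter]
  rw [this]
  refine isOpen_iInter_of_finite fun S => ?_
  by_cases h : S.Nonempty
  · have : {y : Fin n → ℝ | S.Nonempty → 0 < fS n q S y} = {y | 0 < fS n q S y} := by
      ext y; simp [h]
    rw [this]; exact isOpen_lt continuous_const (fS_cont q S)
  · have : {y : Fin n → ℝ | S.Nonempty → 0 < fS n q S y} = Set.univ := by
      ext y; simp [h]
    rw [this]; exact isOpen_univ

lemma orthant_open (n : ℕ) : IsOpen {x : Fin n → ℝ | ∀ i, 0 < x i} := by
  have : {x : Fin n → ℝ | ∀ i, 0 < x i} = ⋂ i, {x | 0 < x i} := by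
    ext x; simp [Set.mem_iInter]
  rw [this]
  exact isOpen_iInter_of_finite fun i => isOpen_lt continuous_const (continuous_apply i)

lemma orthant_preconnected (n : ℕ) : IsPreconnected {x : Fin n → ℝ | ∀ i, 0 < x i} := by
  have : {x : Fin n → ℝ | ∀ i, 0 < x i} = Set.pi Set.univ (fun _ : Fin n => Set.Ioi 0) := by
    ext x; simp [Set.mem_pi]
  rw [this]
  exact (convex_pi fun i _ => convex_Ioi 0).isPreconnected

lemma omega_mem {n : ℕ} {q : ℕ → ℕ} (hq : qCond q) :
    (fun _ : Fin n => (q n : ℝ) + 1) ∈ Omega n q := by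
  intro S hS
  have hcard : S.card ≤ n := by simpa using Finset.card_le_univ S
  have h1 : (1:ℝ) ≤ S.card := by exact_mod_cast hS.card_pos
  have h2 : (q S.card : ℝ) ≤ q n := by exact_mod_cast q_mono q hq hcard
  have h3 : (0:ℝ) ≤ q n := by positivity
  simp only [fS, Finset.sum_const, nsmul_eq_mul]
  nlinarith

lemma image_open {n : ℕ} (q : ℕ → ℕ) : IsOpen (Fmap n q '' Omega n q) := by
  rw [isOpen_iff_mem_nhds]
  rintro x ⟨y, hy, rfl⟩
  have hdet : LinearMap.det ((Dmap n q y) : (Fin n → ℝ) →ₗ[ℝ] (Fin n → ℝ)) ≠ 0 :=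
    (det_Dmap_pos hy).ne'
  set e₀ := LinearMap.equivOfDetNeZero _ hdet with he₀
  set e := e₀.toContinuousLinearEquiv with he1
  have he : (e : (Fin n → ℝ) →L[ℝ] (Fin n → ℝ)) = Dmap n q y := by
    ext v; rfl
  have h := Fmap_hasStrict q y
  rw [← he] at h
  have hmap := h.map_nhds_eq_of_equiv
  have himg : Fmap n q '' Omega n q ∈ Filter.map (Fmap n q) (nhds y) :=
    Filter.image_mem_map ((omega_open q).mem_nhds hy)
  rw [hmap] at himg
  exact himg

lemma closure_sub {n : ℕ} {q : ℕ → ℕ} (hq : qCond q) :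
    ∀ x, x ∈ ({x : Fin n → ℝ | ∀ i, 0 < x i} ∩ closure (Fmap n q '' Omega n q)) →
      x ∈ Fmap n q '' Omega n q := by
  rintro x ⟨hxO, hxc⟩
  obtain ⟨u, hu, hulim⟩ := mem_closure_iff_seq_limit.mp hxc
  choose y hyΩ hyF using hu
  -- a uniform bound on the values u k
  obtain ⟨C, hC⟩ := isBounded_iff_forall_norm_le.mp
    (hulim.isCompact_insert_range.isBounded)
  have hC0 : 0 ≤ C := le_trans (norm_nonneg x) (hC x (Set.mem_insert _ _))
  have hub : ∀ k i, u k i ≤ C := by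
    intro k i
    calc u k i ≤ |u k i| := le_abs_self _
    _ = ‖u k i‖ := rfl
    _ ≤ ‖u k‖ := norm_le_pi_norm (u k) i
    _ ≤ C := hC (u k) (Set.mem_insert_of_mem _ (Set.mem_range_self k))
  have hq1 : (0:ℝ) ≤ (q 1 : ℝ) := by positivity
  have hylow : ∀ k j, 0 ≤ y k j := fun k j => le_trans hq1 (coord_lower (hyΩ k) j).le
  -- uniform upper bound on the y k
  have hyub : ∀ k i, y k i ≤ (q n : ℝ) + 1 + C := by
    intro k i
    by_contra hcon
    push_neg at hcon
    have hfactor : ∀ S ∈ SS n i, ((1:ℝ) + C) ≤ fS n q S (y k) := by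
      intro S hS
      have hiS : i ∈ S := mem_SS.mp hS
      have hcard : S.card ≤ n := by simpa using Finset.card_le_univ S
      have hqc : (q S.card : ℝ) ≤ (q n : ℝ) := by exact_mod_cast q_mono q hq hcard
      have hsum : y k i ≤ ∑ j ∈ S, y k j :=
        Finset.single_le_sum (fun j _ => hylow k j) hiS
      simp only [fS]
      nlinarith
    have hone : ∀ S ∈ SS n i, (1:ℝ) ≤ fS n q S (y k) := by
      intro S hS; nlinarith [hfactor S hS]
    have hprod : ((1:ℝ) + C) ≤ Fmap n q (y k) i := by
      have hmem : ({i} : Finset (Fin n)) ∈ SS n i := mem_SS.mpr (Finset.mem_singleton_self i)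
      calc ((1:ℝ) + C) ≤ fS n q {i} (y k) := hfactor _ hmem
      _ = fS n q {i} (y k) * 1 := (mul_one _).symm
      _ ≤ fS n q {i} (y k) * ∏ S ∈ (SS n i).erase {i}, fS n q S (y k) := by
          refine mul_le_mul_of_nonneg_left ?_ (by nlinarith [hfactor _ hmem])
          calc (1:ℝ) = ∏ _S ∈ (SS n i).erase {i}, (1:ℝ) := (Finset.prod_const_one).symm
          _ ≤ ∏ S ∈ (SS n i).erase {i}, fS n q S (y k) :=
            Finset.prod_le_prod (fun _ _ => zero_le_one)
              (fun S hS => hone S (Finset.mem_of_mem_erase hS))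
      _ = ∏ S ∈ SS n i, fS n q S (y k) := by
          rw [mul_comm, Finset.prod_erase_mul _ _ hmem]
      _ = Fmap n q (y k) i := rfl
    have := hub k i
    rw [← hyF k] at this
    nlinarith
  -- extract a convergent subsequence
  have hbox : ∀ k, y k ∈ Set.pi Set.univ (fun _ : Fin n => Set.Icc (0:ℝ) ((q n : ℝ) + 1 + C)) := by
    intro k
    rw [Set.mem_pi]
    exact fun j _ => ⟨hylow k j, hyub k j⟩
  have hcomp : IsCompact (Set.pi Set.univ (fun _ : Fin n => Set.Icc (0:ℝ) ((q n : ℝ) + 1 + C))) :=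
    isCompact_univ_pi fun _ => isCompact_Icc
  obtain ⟨z, _, φ, hφ, hzlim⟩ := tendsto_subseq_of_bounded hcomp.isBounded hbox
  -- limit of the images
  have hxlim : Filter.Tendsto (fun m => Fmap n q (y (φ m))) Filter.atTop (nhds x) := by
    have : (fun m => Fmap n q (y (φ m))) = u ∘ φ := by
      funext m; exact hyF (φ m)
    rw [this]
    exact hulim.comp (hφ.tendsto_atTop)
  have hFz : Fmap n q z = x :=
    tendsto_nhds_unique (((Fmap_cont q).tendsto z).comp hzlim) hxlim
  -- z belongs to Omega
  have hzΩ : z ∈ Omega n q := by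
    intro S hS
    have hge : 0 ≤ fS n q S z := by
      refine ge_of_tendsto (((fS_cont q S).tendsto z).comp hzlim) ?_
      exact Filter.Eventually.of_forall fun m => (hyΩ (φ m) S hS).le
    rcases hge.lt_or_eq with h | h
    · exact h
    · exfalso
      obtain ⟨i, hiS⟩ := hS
      have hzero : Fmap n q z i = 0 :=
        Finset.prod_eq_zero (mem_SS.mpr hiS) h.symm
      have := hxO i
      rw [← hFz] at this
      rw [hzero] at this
      exact lt_irrefl 0 this
  exact ⟨z, hzΩ, hFz⟩

theorem Fmap_diffeomorphism_onto_orthant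
    (n : ℕ) (hn : 1 ≤ n) (q : ℕ → ℕ) (hq : qCond q) :
    Set.BijOn (Fmap n q) (Omega n q) {x : Fin n → ℝ | ∀ i, 0 < x i} ∧
    (∀ y ∈ Omega n q, 0 < LinearMap.det ((fderiv ℝ (Fmap n q) y).toLinearMap)) := by
  constructor
  · refine ⟨fun y hy i => Fmap_pos hy i, Fmap_injOn q, ?_⟩
    intro x hx
    by_cases hclo : x ∈ closure (Fmap n q '' Omega n q)
    · exact closure_sub hq x ⟨hx, hclo⟩
    · exfalso
      set U := Fmap n q '' Omega n q with hU
      have hOU : {x : Fin n → ℝ | ∀ i, 0 < x i} ⊆ U ∪ (closure U)ᶜ := by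
        intro w hw
        by_cases h : w ∈ closure U
        · exact Or.inl (closure_sub hq w ⟨hw, h⟩)
        · exact Or.inr h
      have hne1 : ({x : Fin n → ℝ | ∀ i, 0 < x i} ∩ U).Nonempty :=
        ⟨Fmap n q (fun _ => (q n : ℝ) + 1), fun i => Fmap_pos (omega_mem hq) i,
          Set.mem_image_of_mem _ (omega_mem hq)⟩
      have hne2 : ({x : Fin n → ℝ | ∀ i, 0 < x i} ∩ (closure U)ᶜ).Nonempty := ⟨x, hx, hclo⟩
      obtain ⟨w, _, hwU, hwc⟩ := orthant_preconnected n U (closure U)ᶜ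
        (image_open q) (isClosed_closure.isOpen_compl) hOU hne1 hne2
      exact hwc (subset_closure hwU)
  · intro y hy
    rw [fderiv_Fmap]
    exact det_Dmap_pos hy
end
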